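/- arXiv:2111.06993 — 7 statements merged into one kernel-verified Lean document; each statement's English description precedes it below -/
import Mathlib

section
/- The layer sizes of a uniform grid are unimodal: [G choose 0] ≤ [G choose 1] ≤ ⋯ ≤ [G choose ⌊N/2⌋] = [G choose ⌈N/2⌉] ≥ ⋯ ≥ [G choose N]. -/
/-- The number of points of the uniform grid `[0,k₁-1] × ⋯ × [0,kₙ-1]` of weight `j`. -/
noncomputable def layerCard (n : ℕ) (k : Fin n → ℕ) (j : ℕ) : ℕ :=
  (Finset.univ.filter (fun x : ∀ i, Fin (k i) => ∑ i, (x i : ℕ) = j)).card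

open Polynomial Finset

/-- The generating polynomial of the grid. -/
noncomputable def Gpoly (n : ℕ) (k : Fin n → ℕ) : Polynomial ℕ :=
  ∏ i, ∑ v ∈ Finset.range (k i), (Polynomial.X : Polynomial ℕ) ^ v

lemma coeff_geom (K a : ℕ) :
    (∑ v ∈ Finset.range K, (X : Polynomial ℕ) ^ v).coeff a = if a < K then 1 else 0 := by
  rw [Polynomial.finset_sum_coeff]
  simp only [Polynomial.coeff_X_pow]
  rw [Finset.sum_ite_eq]
  simp [Finset.mem_range]

lemma layerCard_eq_coeff (n : ℕ) (k : Fin n → ℕ) (j : ℕ) :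
    layerCard n k j = (Gpoly n k).coeff j := by
  unfold Gpoly layerCard
  rw [Finset.prod_univ_sum, Polynomial.finset_sum_coeff]
  have h1 : ∀ x : Fin n → ℕ, (∏ i, (X : Polynomial ℕ) ^ (x i)).coeff j
      = if ∑ i, x i = j then 1 else 0 := by
    intro x
    rw [Finset.prod_pow_eq_pow_sum, Polynomial.coeff_X_pow]
    simp [eq_comm]
  simp only [h1]
  rw [← Finset.card_filter]
  refine Finset.card_bij' (fun x _ => fun i => ((x i : ℕ)))
      (fun y hy => fun i => (⟨y i, by
        simp only [Finset.mem_filter, Fintype.mem_piFinset, Finset.mem_range] at hy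
        exact hy.1 i⟩ : Fin (k i))) ?_ ?_ ?_ ?_
  · intro x hx
    simp only [Finset.mem_filter, Finset.mem_univ, true_and] at hx
    simp [Fintype.mem_piFinset, Finset.mem_range, hx]
  · intro y hy
    simp only [Finset.mem_filter, Fintype.mem_piFinset, Finset.mem_range] at hy
    simp [hy.2]
  · intro x hx; funext i; rfl
  · intro y hy; funext i; rfl

lemma geom_natDegree_le (K : ℕ) :
    (∑ v ∈ Finset.range K, (X : Polynomial ℕ) ^ v).natDegree ≤ K - 1 := by
  apply Polynomial.natDegree_sum_le_of_forall_le
  intro v hv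
  rw [Polynomial.natDegree_X_pow]
  have := Finset.mem_range.mp hv
  omega

lemma Gpoly_natDegree_le (n : ℕ) (k : Fin n → ℕ) :
    (Gpoly n k).natDegree ≤ ∑ i, (k i - 1) := by
  refine le_trans (Polynomial.natDegree_prod_le _ _) (Finset.sum_le_sum ?_)
  intro i _
  exact geom_natDegree_le (k i)

lemma reflect_geom (K : ℕ) :
    Polynomial.reflect (K - 1) (∑ v ∈ Finset.range K, (X : Polynomial ℕ) ^ v)
      = ∑ v ∈ Finset.range K, (X : Polynomial ℕ) ^ v := by
  ext a
  rw [Polynomial.coeff_reflect, coeff_geom, coeff_geom]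
  rcases le_or_gt a (K - 1) with h | h
  · rw [Polynomial.revAt_le h]
    rcases Nat.eq_zero_or_pos K with hK | hK
    · subst hK; simp
    · have h1 : K - 1 - a < K := by omega
      have h2 : a < K := by omega
      simp [h1, h2]
  · rw [Polynomial.revAt_eq_self_of_lt h]

lemma Gpoly_reflect (n : ℕ) (k : Fin n → ℕ) :
    Polynomial.reflect (∑ i, (k i - 1)) (Gpoly n k) = Gpoly n k := by
  induction n with
  | zero => simp [Gpoly]
  | succ m ih =>
    have hprod : Gpoly (m + 1) k
        = (∑ v ∈ Finset.range (k 0), (X : Polynomial ℕ) ^ v) * Gpoly m (fun i => k i.succ) :=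
      Fin.prod_univ_succ _
    have hsum : ∑ i : Fin (m + 1), (k i - 1) = (k 0 - 1) + ∑ i : Fin m, (k i.succ - 1) :=
      Fin.sum_univ_succ _
    rw [hprod, hsum,
      Polynomial.reflect_mul _ _ (geom_natDegree_le (k 0)) (Gpoly_natDegree_le m _),
      reflect_geom, ih]

lemma Gpoly_coeff_symm (n : ℕ) (k : Fin n → ℕ) (j : ℕ) (hj : j ≤ ∑ i, (k i - 1)) :
    (Gpoly n k).coeff j = (Gpoly n k).coeff (∑ i, (k i - 1) - j) := by
  conv_lhs => rw [← Gpoly_reflect n k]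
  rw [Polynomial.coeff_reflect, Polynomial.revAt_le hj]

/-- sliding-window formula for multiplication by a geometric polynomial. -/
lemma coeff_geom_mul (K : ℕ) (P : Polynomial ℕ) (j : ℕ) :
    ((∑ v ∈ Finset.range K, (X : Polynomial ℕ) ^ v) * P).coeff j
      = ∑ u ∈ Finset.Icc (j + 1 - K) j, P.coeff u := by
  rw [Polynomial.coeff_mul, Finset.Nat.sum_antidiagonal_eq_sum_range_succ_mk]
  simp only [coeff_geom]
  rw [← Finset.sum_range_reflect]
  have h1 : ∀ u ∈ Finset.range (j + 1),
      (if j + 1 - 1 - u < K then (1:ℕ) else 0) * P.coeff (j - (j + 1 - 1 - u))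
        = if j + 1 - K ≤ u then P.coeff u else 0 := by
    intro u hu
    have hu' := Finset.mem_range.mp hu
    have e1 : j + 1 - 1 - u = j - u := by omega
    have e2 : j - (j - u) = u := by omega
    rw [e1, e2]
    by_cases h : j - u < K
    · rw [if_pos h, if_pos (by omega), one_mul]
    · rw [if_neg h, if_neg (by omega), zero_mul]
  rw [Finset.sum_congr rfl h1, ← Finset.sum_filter]
  congr 1
  ext u
  simp only [Finset.mem_filter, Finset.mem_range, Finset.mem_Icc]
  omega

/-- A symmetric unimodal function is larger at the index closer to the center. -/
lemma su_cmp (f : ℕ → ℕ) (N : ℕ)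
    (hs : ∀ j ≤ N, f j = f (N - j))
    (hm : ∀ j, 2 * j + 2 ≤ N → f j ≤ f (j + 1))
    (u v : ℕ) (hvu : v ≤ u) (huv : u + v ≤ N) : f v ≤ f u := by
  have chain : ∀ d a, 2 * (a + d) ≤ N → f a ≤ f (a + d) := by
    intro d
    induction d with
    | zero => intro a _; simp
    | succ e ihe =>
      intro a ha
      have h1 : f a ≤ f (a + e) := ihe a (by omega)
      have h2 : f (a + e) ≤ f (a + e + 1) := hm (a + e) (by omega)
      calc f a ≤ f (a + e) := h1
        _ ≤ f (a + (e + 1)) := by rw [show a + (e + 1) = a + e + 1 by omega]; exact h2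
  rcases le_or_gt (2 * u) N with h | h
  · have := chain (u - v) v (by omega)
    rwa [show v + (u - v) = u by omega] at this
  · have hu : u ≤ N := by omega
    rw [hs u hu]
    have := chain (N - u - v) v (by omega)
    rwa [show v + (N - u - v) = N - u by omega] at this

lemma Gpoly_mono (n : ℕ) (k : Fin n → ℕ) (hk : ∀ i, 2 ≤ k i) :
    ∀ j, 2 * j + 2 ≤ ∑ i, (k i - 1) →
      (Gpoly n k).coeff j ≤ (Gpoly n k).coeff (j + 1) := by
  induction n with
  | zero => intro j hj; simp at hj
  | succ m ih =>
    intro j hj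
    set K := k 0 with hK
    set k' : Fin m → ℕ := fun i => k i.succ with hk'
    set P := Gpoly m k' with hP
    set N' := ∑ i : Fin m, (k' i - 1) with hN'
    have hprod : Gpoly (m + 1) k = (∑ v ∈ Finset.range K, (X : Polynomial ℕ) ^ v) * P :=
      Fin.prod_univ_succ _
    have hsum : ∑ i : Fin (m + 1), (k i - 1) = (K - 1) + N' := Fin.sum_univ_succ _
    rw [hsum] at hj
    have hK2 : 2 ≤ K := hk 0
    rw [hprod, coeff_geom_mul, coeff_geom_mul]
    by_cases hcase : K ≤ j + 1
    · -- window slides; compare the dropped bottom term with the new top term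
      have hicc1 : ∑ u ∈ Finset.Icc (j + 1 - K) j, P.coeff u
          = P.coeff (j + 1 - K) + ∑ u ∈ Finset.Icc (j + 2 - K) j, P.coeff u := by
        rw [← Finset.Ico_add_one_right_eq_Icc, Finset.sum_eq_sum_Ico_succ_bot (by omega) P.coeff,
          show j + 1 - K + 1 = j + 2 - K by omega, Finset.Ico_add_one_right_eq_Icc]
      have hicc2 : ∑ u ∈ Finset.Icc (j + 1 + 1 - K) (j + 1), P.coeff u
          = ∑ u ∈ Finset.Icc (j + 2 - K) j, P.coeff u + P.coeff (j + 1) := by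
        rw [show j + 1 + 1 - K = j + 2 - K by omega]
        exact Finset.sum_Icc_succ_top (by omega) P.coeff
      rw [hicc1, hicc2]
      have hcmp : P.coeff (j + 1 - K) ≤ P.coeff (j + 1) := by
        apply su_cmp P.coeff N'
        · intro i hi; exact Gpoly_coeff_symm m k' i hi
        · intro i hi; exact ih k' (fun i => hk i.succ) i hi
        · omega
        · omega
      omega
    · -- window only grows
      have e1 : j + 1 - K = 0 := by omega
      have e2 : j + 1 + 1 - K = 0 := by omega
      rw [e1, e2, Finset.sum_Icc_succ_top (Nat.zero_le _) P.coeff]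
      exact Nat.le_add_right _ _

/-- The layer sizes of a uniform grid are unimodal: increasing up to `⌊N/2⌋`,
equal at `⌊N/2⌋` and `⌈N/2⌉`, and decreasing from `⌈N/2⌉` on. -/
theorem stmt_1 (n : ℕ) (k : Fin n → ℕ) (hk : ∀ i, 2 ≤ k i)
    (N : ℕ) (hN : N = ∑ i, (k i - 1)) :
    (∀ j, j < N / 2 → layerCard n k j ≤ layerCard n k (j + 1)) ∧
    layerCard n k (N / 2) = layerCard n k ((N + 1) / 2) ∧
    (∀ j, (N + 1) / 2 ≤ j → j < N → layerCard n k (j + 1) ≤ layerCard n k j) := by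
  have hmono : ∀ j, 2 * j + 2 ≤ N →
      layerCard n k j ≤ layerCard n k (j + 1) := by
    intro j hj
    rw [layerCard_eq_coeff, layerCard_eq_coeff]
    exact Gpoly_mono n k hk j (hN ▸ hj)
  have hsymm : ∀ j, j ≤ N → layerCard n k j = layerCard n k (N - j) := by
    intro j hj
    rw [layerCard_eq_coeff, layerCard_eq_coeff, hN]
    exact Gpoly_coeff_symm n k j (hN ▸ hj)
  refine ⟨fun j hj => hmono j (by omega), ?_, ?_⟩
  · have h1 : N / 2 ≤ N := by omega
    have := hsymm (N / 2) h1
    rwa [show N - N / 2 = (N + 1) / 2 by omega] at this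
  · intro j hj1 hj2
    have h1 : layerCard n k (j + 1) = layerCard n k (N - (j + 1)) := hsymm (j + 1) (by omega)
    have h2 : layerCard n k j = layerCard n k (N - j) := hsymm j (by omega)
    rw [h1, h2]
    have h3 : layerCard n k (N - j - 1) ≤ layerCard n k (N - j - 1 + 1) :=
      hmono (N - j - 1) (by omega)
    rwa [show N - j - 1 + 1 = N - j by omega, show N - j - 1 = N - (j + 1) by omega] at h3
end

section
/- Let G be a uniform grid. If a family of polynomials {f_α : α ∈ G} satisfies that the coefficient of X^α in f_α is nonzero and f_α lies in the span of the monomials X^β with β ≤ α coordinatewise and β ∈ G, then for every a ∈ ℕⁿ the family {f_α} is a basis of the space of functions on the shifted grid G + a = {b + a : b ∈ G}. -/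
open MvPolynomial

/-- A polynomial whose degree in each variable `i` is less than `k i` and which vanishes
on a shifted grid `∏ [a i, a i + k i - 1]` is the zero polynomial. -/
lemma grid_vanish : ∀ (n : ℕ) (k : Fin n → ℕ) (a : Fin n → ℕ)
    (p : MvPolynomial (Fin n) ℝ) (_ : ∀ i, p.degreeOf i < k i)
    (_ : ∀ x : ∀ i, Fin (k i),
      MvPolynomial.eval (fun i => ((x i : ℕ) : ℝ) + (a i : ℝ)) p = 0), p = 0 := by
  intro n
  induction n with
  | zero =>
    intro k a p _ hev
    obtain ⟨r, rfl⟩ := MvPolynomial.C_surjective (Fin 0) p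
    have := hev (fun i => i.elim0)
    simpa using this
  | succ n IH =>
    intro k a p hdeg hev
    set q := finSuccEquiv ℝ n p with hq
    have key : ∀ x : ∀ i : Fin n, Fin (k i.succ), ∀ m : ℕ,
        MvPolynomial.eval (fun i => ((x i : ℕ) : ℝ) + (a i.succ : ℝ)) (q.coeff m) = 0 := by
      intro x m
      set ev := MvPolynomial.eval (fun i => ((x i : ℕ) : ℝ) + (a i.succ : ℝ)) with hev'
      have hr : q.map ev = 0 := by
        apply Polynomial.eq_zero_of_natDegree_lt_card_of_eval_eq_zero _
          (f := fun j : Fin (k 0) => ((j : ℕ) : ℝ) + (a 0 : ℝ))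
        · intro j1 j2 h
          have h' : ((j1 : ℕ) : ℝ) = ((j2 : ℕ) : ℝ) := by
            simpa using h
          exact Fin.val_injective (Nat.cast_injective h')
        · intro j
          have h1 : Polynomial.eval (((j : ℕ) : ℝ) + (a 0 : ℝ)) (q.map ev)
              = MvPolynomial.eval
                (Fin.cons (((j : ℕ) : ℝ) + (a 0 : ℝ))
                  (fun i => ((x i : ℕ) : ℝ) + (a i.succ : ℝ))) p := by
            rw [eval_eq_eval_mv_eval']
          rw [h1]
          have h2 : (Fin.cons (((j : ℕ) : ℝ) + (a 0 : ℝ))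
              (fun i => ((x i : ℕ) : ℝ) + (a i.succ : ℝ)) : Fin (n+1) → ℝ)
              = fun i => (((Fin.cons j x : ∀ i : Fin (n+1), Fin (k i)) i : ℕ) : ℝ) + (a i : ℝ) := by
            funext i
            refine Fin.cases ?_ ?_ i <;> simp
          rw [h2]
          exact hev (Fin.cons j x)
        · calc (q.map ev).natDegree ≤ q.natDegree := Polynomial.natDegree_map_le
            _ = p.degreeOf 0 := natDegree_finSuccEquiv p
            _ < k 0 := hdeg 0
            _ = Fintype.card (Fin (k 0)) := (Fintype.card_fin _).symm
      have := congrArg (fun r => Polynomial.coeff r m) hr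
      simpa [Polynomial.coeff_map] using this
    have hcoeffzero : ∀ m, q.coeff m = 0 := by
      intro m
      refine IH (fun i => k i.succ) (fun i => a i.succ) (q.coeff m) ?_ (fun x => key x m)
      intro i
      exact lt_of_le_of_lt (degreeOf_coeff_finSuccEquiv p i m) (hdeg i.succ)
    have hq0 : q = 0 := Polynomial.ext fun m => by simp [hcoeffzero m]
    exact (finSuccEquiv ℝ n).injective (by rw [← hq, hq0, map_zero])

/-- Membership in the span of grid monomials bounds the degree in each variable. -/
lemma degree_bound_aux (n : ℕ) (k : Fin n → ℕ) (hk : ∀ i, 2 ≤ k i)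
    {p : MvPolynomial (Fin n) ℝ} {S : Set (∀ i, Fin (k i))}
    (hp : p ∈ Submodule.span ℝ ((fun β : ∀ i, Fin (k i) =>
      (MvPolynomial.monomial (Finsupp.equivFunOnFinite.symm fun i => (β i : ℕ)) (1 : ℝ))) '' S)) :
    ∀ i, p.degreeOf i < k i := by
  let D : Submodule ℝ (MvPolynomial (Fin n) ℝ) :=
  { carrier := {p | ∀ i, p.degreeOf i < k i}
    add_mem' := fun ha hb i =>
      lt_of_le_of_lt (MvPolynomial.degreeOf_add_le i _ _) (max_lt (ha i) (hb i))
    zero_mem' := fun i => by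
      rw [MvPolynomial.degreeOf_zero]
      have := hk i; omega
    smul_mem' := fun c q hq i => by
      rw [MvPolynomial.smul_eq_C_mul]
      calc MvPolynomial.degreeOf i (MvPolynomial.C c * q)
          ≤ MvPolynomial.degreeOf i (MvPolynomial.C c : MvPolynomial (Fin n) ℝ)
            + q.degreeOf i := MvPolynomial.degreeOf_mul_le i _ _
        _ = q.degreeOf i := by rw [MvPolynomial.degreeOf_C, zero_add]
        _ < k i := hq i }
  have hle : Submodule.span ℝ ((fun β : ∀ i, Fin (k i) =>
      (MvPolynomial.monomial (Finsupp.equivFunOnFinite.symm fun i => (β i : ℕ)) (1 : ℝ))) '' S)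
      ≤ D := by
    rw [Submodule.span_le]
    rintro _ ⟨β, -, rfl⟩
    intro i
    show MvPolynomial.degreeOf i
      (MvPolynomial.monomial (Finsupp.equivFunOnFinite.symm fun i => (β i : ℕ)) (1 : ℝ)) < k i
    rw [MvPolynomial.degreeOf_monomial_eq _ i one_ne_zero]
    show ((Finsupp.equivFunOnFinite.symm fun i => (β i : ℕ)) : (Fin n →₀ ℕ)) i < k i
    simpa using (β i).isLt
  exact hle hp

/-- A polynomial in the span of monomials with exponents `≤ β` has zero coefficient at any
exponent not `≤ β`. -/
lemma coeff_vanish_aux (n : ℕ) (k : Fin n → ℕ) {p : MvPolynomial (Fin n) ℝ}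
    {β : ∀ i, Fin (k i)}
    (hp : p ∈ Submodule.span ℝ ((fun γ : ∀ i, Fin (k i) =>
      (MvPolynomial.monomial (Finsupp.equivFunOnFinite.symm fun i => (γ i : ℕ)) (1 : ℝ))) ''
      {γ | ∀ i, (γ i : ℕ) ≤ (β i : ℕ)}))
    (α : ∀ i, Fin (k i)) (hαβ : ¬ ∀ i, (α i : ℕ) ≤ (β i : ℕ)) :
    MvPolynomial.coeff (Finsupp.equivFunOnFinite.symm fun i => (α i : ℕ)) p = 0 := by
  have hle : Submodule.span ℝ ((fun γ : ∀ i, Fin (k i) =>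
      (MvPolynomial.monomial (Finsupp.equivFunOnFinite.symm fun i => (γ i : ℕ)) (1 : ℝ))) ''
      {γ | ∀ i, (γ i : ℕ) ≤ (β i : ℕ)})
      ≤ LinearMap.ker (MvPolynomial.lcoeff ℝ
        (Finsupp.equivFunOnFinite.symm fun i => (α i : ℕ))) := by
    rw [Submodule.span_le]
    rintro _ ⟨γ, hγ, rfl⟩
    rw [SetLike.mem_coe, LinearMap.mem_ker, MvPolynomial.lcoeff_apply,
      MvPolynomial.coeff_monomial]
    rw [if_neg]
    intro h
    apply hαβ
    intro i
    have : (α i : ℕ) = (γ i : ℕ) := by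
      have h2 := congrArg (fun (g : Fin n →₀ ℕ) => g i) h
      simpa using h2.symm
    rw [this]
    exact hγ i
  have := hle hp
  rw [LinearMap.mem_ker, MvPolynomial.lcoeff_apply] at this
  exact this

/-- Corollary of the Combinatorial Nullstellensatz: if a family of polynomials
`{f_α : α ∈ G}` satisfies that the coefficient of `X^α` in `f_α` is nonzero and `f_α`
lies in the span of the monomials `X^β` with `β ≤ α` coordinatewise, then for every
`a ∈ ℕⁿ` the evaluations of the `f_α` form a basis of the space of functions on the
shifted grid `G + a`. -/
theorem stmt_4 (n : ℕ) (k : Fin n → ℕ) (hk : ∀ i, 2 ≤ k i)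
    (f : (∀ i, Fin (k i)) → MvPolynomial (Fin n) ℝ)
    (hcoeff : ∀ α, MvPolynomial.coeff
      (Finsupp.equivFunOnFinite.symm fun i => (α i : ℕ)) (f α) ≠ 0)
    (hspan : ∀ α, f α ∈ Submodule.span ℝ
      ((fun β : ∀ i, Fin (k i) =>
          (MvPolynomial.monomial (Finsupp.equivFunOnFinite.symm fun i => (β i : ℕ)) (1 : ℝ))) ''
        {β | ∀ i, (β i : ℕ) ≤ (α i : ℕ)}))
    (a : Fin n → ℕ) :
    LinearIndependent ℝ (fun (α : ∀ i, Fin (k i)) => (fun (x : ∀ i, Fin (k i)) =>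
      MvPolynomial.eval (fun i => ((x i : ℕ) : ℝ) + (a i : ℝ)) (f α))) ∧
    Submodule.span ℝ (Set.range (fun (α : ∀ i, Fin (k i)) => (fun (x : ∀ i, Fin (k i)) =>
      MvPolynomial.eval (fun i => ((x i : ℕ) : ℝ) + (a i : ℝ)) (f α)))) = ⊤ := by
  classical
  have hLI : LinearIndependent ℝ (fun (α : ∀ i, Fin (k i)) => (fun (x : ∀ i, Fin (k i)) =>
      MvPolynomial.eval (fun i => ((x i : ℕ) : ℝ) + (a i : ℝ)) (f α))) := by
    rw [Fintype.linearIndependent_iff]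
    intro c hc
    set g : MvPolynomial (Fin n) ℝ := ∑ α : (∀ i, Fin (k i)), c α • f α with hg
    have hgmem : g ∈ Submodule.span ℝ ((fun β : ∀ i, Fin (k i) =>
        (MvPolynomial.monomial (Finsupp.equivFunOnFinite.symm fun i => (β i : ℕ)) (1 : ℝ))) ''
        Set.univ) := by
      apply Submodule.sum_mem
      intro α _
      apply Submodule.smul_mem
      exact Submodule.span_mono (Set.image_mono (Set.subset_univ _)) (hspan α)
    have hdeg : ∀ i, g.degreeOf i < k i := degree_bound_aux n k hk hgmem
    have hvan : ∀ x : ∀ i, Fin (k i),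
        MvPolynomial.eval (fun i => ((x i : ℕ) : ℝ) + (a i : ℝ)) g = 0 := by
      intro x
      have hx := congrFun hc x
      simp only [Finset.sum_apply, Pi.smul_apply, smul_eq_mul, Pi.zero_apply] at hx
      rw [hg, map_sum]
      simpa using hx
    have hg0 : g = 0 := grid_vanish n k a g hdeg hvan
    by_contra hne
    push_neg at hne
    obtain ⟨α₀, hα₀⟩ := hne
    set s : Finset (∀ i, Fin (k i)) := Finset.univ.filter (fun α => c α ≠ 0) with hs
    obtain ⟨α, hαs, hmax⟩ := s.exists_maximal ⟨α₀, by simp [hs, hα₀]⟩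
    have hcα : c α ≠ 0 := by simpa [hs] using hαs
    have hco : MvPolynomial.coeff (Finsupp.equivFunOnFinite.symm fun i => (α i : ℕ)) g = 0 := by
      rw [hg0]; simp
    rw [hg, MvPolynomial.coeff_sum] at hco
    have hterm : ∀ β ∈ (Finset.univ : Finset (∀ i, Fin (k i))), β ≠ α →
        MvPolynomial.coeff (Finsupp.equivFunOnFinite.symm fun i => (α i : ℕ)) (c β • f β)
          = 0 := by
      intro β _ hβα
      by_cases hcβ : c β = 0
      · simp [hcβ]
      have hnle : ¬ ∀ i, (α i : ℕ) ≤ (β i : ℕ) := by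
        intro hle
        have hltαβ : α < β := by
          refine lt_of_le_of_ne ?_ (Ne.symm hβα)
          intro i
          exact (Fin.le_def).mpr (hle i)
        exact absurd (hmax (y := β) (by simp [hs, hcβ]) hltαβ.le) (not_le_of_gt hltαβ)
      rw [MvPolynomial.coeff_smul, coeff_vanish_aux n k (hspan β) α hnle, smul_zero]
    rw [Finset.sum_eq_single α hterm (by simp)] at hco
    rw [MvPolynomial.coeff_smul, smul_eq_mul] at hco
    exact hcα (by
      rcases mul_eq_zero.mp hco with h | h
      · exact h
      · exact absurd h (hcoeff α))
  refine ⟨hLI, ?_⟩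
  haveI : Nonempty (∀ i, Fin (k i)) := ⟨fun i => ⟨0, by have := hk i; omega⟩⟩
  apply hLI.span_eq_top_of_card_eq_finrank
  rw [Module.finrank_fintype_fun_eq_card]
end

section
/- Let G be a uniform grid, d,w ∈ [0,N] with d < w. As functions on the layer of weight w, for every α ∈ G with wt(α) = d, the falling-factorial monomial Y^(α) equals (1/(w−d)) times the sum of Y^(β) over β ∈ G with β ≥ α coordinatewise and wt(β) = d+1. -/
/-- The falling-factorial monomial `Y^(α)` evaluated at `x`:
`Y^(α)(x) = ∏ i, xᵢ(xᵢ-1)⋯(xᵢ-αᵢ+1)`. -/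
noncomputable def Yeval (n : ℕ) (α : Fin n → ℕ) (x : Fin n → ℝ) : ℝ :=
  ∏ i, ∏ t ∈ Finset.range (α i), (x i - (t : ℝ))

lemma Yeval_succ (n : ℕ) (α : Fin n → ℕ) (x : Fin n → ℝ) (i : Fin n) :
    Yeval n (fun j => α j + if j = i then 1 else 0) x = Yeval n α x * (x i - (α i : ℝ)) := by
  unfold Yeval
  have h1 : ∀ j ∈ Finset.univ.erase i,
      ∏ t ∈ Finset.range (α j + if j = i then 1 else 0), (x j - (t : ℝ))
        = ∏ t ∈ Finset.range (α j), (x j - (t : ℝ)) := by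
    intro j hj
    rw [if_neg (Finset.ne_of_mem_erase hj), Nat.add_zero]
  rw [← Finset.mul_prod_erase Finset.univ
        (fun j => ∏ t ∈ Finset.range (α j + if j = i then 1 else 0), (x j - (t : ℝ)))
        (Finset.mem_univ i),
      ← Finset.mul_prod_erase Finset.univ
        (fun j => ∏ t ∈ Finset.range (α j), (x j - (t : ℝ))) (Finset.mem_univ i),
      Finset.prod_congr rfl h1]
  simp only [eq_self_iff_true, if_true]
  rw [Finset.prod_range_succ]
  ring

lemma Yeval_zero (n : ℕ) (α : Fin n → ℕ) (x : Fin n → ℕ) (i : Fin n) (h : x i < α i) :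
    Yeval n α (fun j => ((x j : ℕ) : ℝ)) = 0 := by
  unfold Yeval
  apply Finset.prod_eq_zero (Finset.mem_univ i)
  apply Finset.prod_eq_zero (Finset.mem_range.2 h)
  simp

lemma exists_index (n : ℕ) (k : Fin n → ℕ) (α β : ∀ i, Fin (k i))
    (hle : ∀ i, (α i : ℕ) ≤ (β i : ℕ))
    (hsum : ∑ i, (β i : ℕ) = (∑ i, (α i : ℕ)) + 1) :
    ∃ i, (β i : ℕ) = (α i : ℕ) + 1 ∧ ∀ j, j ≠ i → β j = α j := by
  set c : Fin n → ℕ := fun i => (β i : ℕ) - (α i : ℕ) with hc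
  have hsumc : ∑ i, c i = 1 := by
    have h1 : ∑ i, (c i + (α i : ℕ)) = ∑ i, (β i : ℕ) :=
      Finset.sum_congr rfl (fun i _ => Nat.sub_add_cancel (hle i))
    rw [Finset.sum_add_distrib] at h1
    omega
  have hex : ∃ i, c i ≠ 0 := by
    by_contra hno
    push_neg at hno
    rw [Finset.sum_eq_zero (fun i _ => hno i)] at hsumc
    omega
  obtain ⟨i, hi⟩ := hex
  have hle1 : c i ≤ 1 := hsumc ▸ Finset.single_le_sum (fun j _ => Nat.zero_le (c j)) (Finset.mem_univ i)
  have hci : c i = 1 := by omega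
  refine ⟨i, by simp only [hc] at hci; omega, fun j hj => ?_⟩
  have hrest : ∑ j ∈ Finset.univ.erase i, c j = 0 := by
    have := Finset.add_sum_erase Finset.univ c (Finset.mem_univ i)
    omega
  have hcj : c j = 0 := by
    have := Finset.sum_eq_zero_iff.1 hrest j (Finset.mem_erase.2 ⟨hj, Finset.mem_univ j⟩)
    exact this
  have : (β j : ℕ) = (α j : ℕ) := by have := hle j; simp only [hc] at hcj; omega
  exact Fin.ext this

/-- As functions on the layer of weight `w` of a uniform grid, for `α` of weight `d < w`,
`Y^(α) = (1/(w-d)) ∑_{β ≥ α, wt(β) = d+1} Y^(β)`. -/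
theorem stmt_5 (n : ℕ) (k : Fin n → ℕ) (hk : ∀ i, 2 ≤ k i)
    (N : ℕ) (hN : N = ∑ i, (k i - 1)) (d w : ℕ) (hdw : d < w) (hw : w ≤ N)
    (α : ∀ i, Fin (k i)) (hα : ∑ i, (α i : ℕ) = d) :
    ∀ x : ∀ i, Fin (k i), ∑ i, (x i : ℕ) = w →
      Yeval n (fun i => (α i : ℕ)) (fun i => ((x i : ℕ) : ℝ)) =
        (1 / ((w : ℝ) - (d : ℝ))) *
          ∑ β ∈ Finset.univ.filter (fun β : ∀ i, Fin (k i) =>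
              (∀ i, (α i : ℕ) ≤ (β i : ℕ)) ∧ ∑ i, (β i : ℕ) = d + 1),
            Yeval n (fun i => (β i : ℕ)) (fun i => ((x i : ℕ) : ℝ)) := by
  intro x hx
  set X : Fin n → ℝ := fun i => ((x i : ℕ) : ℝ) with hX
  set s : Finset (Fin n) := Finset.univ.filter (fun i => (α i : ℕ) + 1 < k i) with hs
  -- the β-sum equals the sum over indices i with α i + 1 < k i
  have key : ∑ β ∈ Finset.univ.filter (fun β : ∀ i, Fin (k i) =>
        (∀ i, (α i : ℕ) ≤ (β i : ℕ)) ∧ ∑ i, (β i : ℕ) = d + 1),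
        Yeval n (fun i => (β i : ℕ)) X
      = ∑ i ∈ s, Yeval n (fun j => (α j : ℕ)) X * (X i - ((α i : ℕ) : ℝ)) := by
    symm
    refine Finset.sum_bij (i := fun i hi =>
        Function.update α i ⟨(α i : ℕ) + 1, by
          simp only [hs, Finset.mem_filter] at hi; exact hi.2⟩) ?_ ?_ ?_ ?_
    · intro i hi
      simp only [Finset.mem_filter, Finset.mem_univ, true_and]
      constructor
      · intro j
        rcases eq_or_ne j i with rfl | hji
        · simp
        · simp [Function.update_of_ne hji]
      · have : ∀ j, ((Function.update α i (⟨(α i : ℕ) + 1, by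
            simp only [hs, Finset.mem_filter] at hi; exact hi.2⟩ : Fin (k i)) j : ℕ))
            = (α j : ℕ) + if j = i then 1 else 0 := by
          intro j
          rcases eq_or_ne j i with rfl | hji
          · simp
          · simp [Function.update_of_ne hji, hji]
        rw [Finset.sum_congr rfl (fun j _ => this j), Finset.sum_add_distrib, hα,
          Finset.sum_ite_eq' Finset.univ i (fun _ => 1), if_pos (Finset.mem_univ i)]
    · intro i hi i' hi' heq
      by_contra hne
      have h2 := congrFun heq i
      simp only [Function.update_of_ne hne] at h2
      have := congrArg (fun (y : Fin (k i)) => (y : ℕ)) h2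
      simp at this
    · intro β hβ
      simp only [Finset.mem_filter, Finset.mem_univ, true_and] at hβ
      obtain ⟨hle, hsum⟩ := hβ
      obtain ⟨i, hi1, hi2⟩ := exists_index n k α β hle (by rw [hsum, hα])
      have hik : (α i : ℕ) + 1 < k i := by
        have := (β i).isLt; omega
      refine ⟨i, by simp [hs, hik], ?_⟩
      funext j
      rcases eq_or_ne j i with rfl | hji
      · simp only [Function.update_self]; exact Fin.ext (by simpa using hi1.symm)
      · simp only [Function.update_of_ne hji]; exact (hi2 j hji).symm
    · intro i hi
      have hfun : (fun j => ((Function.update α i (⟨(α i : ℕ) + 1, by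
            simp only [hs, Finset.mem_filter] at hi; exact hi.2⟩ : Fin (k i)) j : ℕ)))
          = fun j => (α j : ℕ) + if j = i then 1 else 0 := by
        funext j
        rcases eq_or_ne j i with rfl | hji
        · simp
        · simp [Function.update_of_ne hji, hji]
      beta_reduce
      rw [hfun]
      exact (Yeval_succ n (fun j => (α j : ℕ)) X i).symm
  rw [key]
  -- extend the sum over s to all of univ
  have ext0 : ∑ i ∈ s, Yeval n (fun j => (α j : ℕ)) X * (X i - ((α i : ℕ) : ℝ))
      = ∑ i, Yeval n (fun j => (α j : ℕ)) X * (X i - ((α i : ℕ) : ℝ)) := by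
    refine Finset.sum_subset (Finset.subset_univ s) ?_
    intro i _ hi
    simp only [hs, Finset.mem_filter, Finset.mem_univ, true_and, not_lt] at hi
    have hα_top : (α i : ℕ) = k i - 1 := by have := (α i).isLt; omega
    have hxle : (x i : ℕ) ≤ (α i : ℕ) := by have := (x i).isLt; omega
    rcases lt_or_eq_of_le hxle with hlt | heq
    · rw [Yeval_zero n (fun j => (α j : ℕ)) (fun j => (x j : ℕ)) i hlt]
      ring
    · have : X i - ((α i : ℕ) : ℝ) = 0 := by simp [hX, heq]
      rw [this, mul_zero]
  rw [ext0, ← Finset.mul_sum, Finset.sum_sub_distrib]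
  have hXsum : ∑ i, X i = (w : ℝ) := by
    simp only [hX]
    rw [← Nat.cast_sum, hx]
  have hαsum : ∑ i, ((α i : ℕ) : ℝ) = (d : ℝ) := by
    rw [← Nat.cast_sum, hα]
  rw [hXsum, hαsum]
  have hne : (w : ℝ) - (d : ℝ) ≠ 0 := by
    have : (d : ℝ) < (w : ℝ) := by exact_mod_cast hdw
    linarith
  field_simp
end

section
/- Let G be a uniform grid and d,w ∈ [0,N] with d < w. Every function on the layer of weight w that is represented by a polynomial of degree at most d lies in the linear span of the functions Y^(α) with α ∈ G, wt(α) = d, restricted to that layer. -/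
open MvPolynomial Finset

/-- One-variable falling factorial as a polynomial. -/
noncomputable def Fpoly (n : ℕ) (i : Fin n) (a : ℕ) : MvPolynomial (Fin n) ℝ :=
  ∏ t ∈ Finset.range a, (X i - C (t : ℝ))

lemma Fpoly_decomp (n : ℕ) (i : Fin n) (a : ℕ) :
    ∃ D : MvPolynomial (Fin n) ℝ,
      Fpoly n i a = X i ^ a + D ∧ D.totalDegree ≤ a - 1 ∧ (a = 0 → D = 0) := by
  induction a with
  | zero => exact ⟨0, by simp [Fpoly], by simp, fun _ => rfl⟩
  | succ a ih =>
    obtain ⟨D, hD, hdeg, hzero⟩ := ih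
    refine ⟨D * X i - C (a : ℝ) * (X i ^ a + D), ?_, ?_, by simp⟩
    · rw [Fpoly, Finset.prod_range_succ, ← Fpoly, hD]; ring
    · rcases Nat.eq_zero_or_pos a with ha | ha
      · subst ha; simp [hzero rfl]
      · refine le_trans (totalDegree_sub _ _) (max_le ?_ ?_)
        · refine le_trans (totalDegree_mul _ _) ?_
          have := totalDegree_X (R := ℝ) i
          omega
        · refine le_trans (totalDegree_mul _ _) ?_
          have h1 : (C (a : ℝ) : MvPolynomial (Fin n) ℝ).totalDegree = 0 :=
            totalDegree_C _
          have h2 : (X i ^ a + D).totalDegree ≤ a := by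
            refine le_trans (totalDegree_add _ _) (max_le ?_ (by omega))
            rw [totalDegree_X_pow]
          omega

lemma prod_decomp (n : ℕ) (α : Fin n → ℕ) (s : Finset (Fin n)) :
    ∃ E : MvPolynomial (Fin n) ℝ,
      (∏ i ∈ s, Fpoly n i (α i)) = (∏ i ∈ s, X i ^ α i) + E ∧
      E.totalDegree ≤ (∑ i ∈ s, α i) - 1 ∧ ((∑ i ∈ s, α i) = 0 → E = 0) := by
  induction s using Finset.cons_induction with
  | empty => exact ⟨0, by simp, by simp, fun _ => rfl⟩
  | cons i s his ih =>
    obtain ⟨E, hE, hdegE, hzE⟩ := ih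
    obtain ⟨D, hD, hdegD, hzD⟩ := Fpoly_decomp n i (α i)
    have hP : (∏ j ∈ s, X j ^ α j : MvPolynomial (Fin n) ℝ).totalDegree ≤ ∑ j ∈ s, α j := by
      refine le_trans (totalDegree_finset_prod _ _) ?_
      refine Finset.sum_le_sum fun j _ => ?_
      rw [totalDegree_X_pow]
    refine ⟨X i ^ α i * E + D * (∏ j ∈ s, X j ^ α j) + D * E, ?_, ?_, ?_⟩
    · rw [Finset.prod_cons, Finset.prod_cons, hE, hD]; ring
    · rw [Finset.sum_cons]
      rcases Nat.eq_zero_or_pos (α i) with ha | ha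
      · rw [ha] at hzD ⊢
        simp only [hzD rfl, pow_zero, one_mul, zero_mul, add_zero]
        omega
      · rcases Nat.eq_zero_or_pos (∑ j ∈ s, α j) with hs0 | hs0
        · rw [hs0] at hzE ⊢
          simp only [hzE rfl, mul_zero, zero_add, add_zero]
          refine le_trans (totalDegree_mul _ _) ?_
          rw [hs0] at hP
          omega
        · refine le_trans (totalDegree_add _ _) (max_le (le_trans (totalDegree_add _ _)
            (max_le ?_ ?_)) ?_)
          · refine le_trans (totalDegree_mul _ _) ?_
            rw [totalDegree_X_pow]; omega
          · refine le_trans (totalDegree_mul _ _) ?_; omega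
          · refine le_trans (totalDegree_mul _ _) ?_; omega
    · rw [Finset.sum_cons]
      intro h
      have ha : α i = 0 := by omega
      have hs0 : ∑ j ∈ s, α j = 0 := by omega
      rw [hzD ha, hzE hs0]; simp

lemma eval_Fprod (n : ℕ) (α : Fin n → ℕ) (y : Fin n → ℝ) :
    eval y (∏ i, Fpoly n i (α i)) = Yeval n α y := by
  simp [Fpoly, Yeval]

/-- Claim A: restriction of a polynomial of total degree ≤ e lies in the span of
the `Yeval` functions of weight ≤ e. -/
lemma claimA (n : ℕ) (k : Fin n → ℕ) (w : ℕ) (e : ℕ) :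
    ∀ p : MvPolynomial (Fin n) ℝ, p.totalDegree ≤ e →
      (fun x : {x : ∀ i, Fin (k i) // ∑ i, (x i : ℕ) = w} =>
        eval (fun i => ((x.1 i : ℕ) : ℝ)) p)
      ∈ Submodule.span ℝ ((fun β : Fin n → ℕ =>
          (fun x : {x : ∀ i, Fin (k i) // ∑ i, (x i : ℕ) = w} =>
            Yeval n β fun i => ((x.1 i : ℕ) : ℝ))) '' {β | ∑ i, β i ≤ e}) := by
  induction e using Nat.strong_induction_on with
  | _ e ih =>
  intro p hp
  have hrw : (fun x : {x : ∀ i, Fin (k i) // ∑ i, (x i : ℕ) = w} =>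
      eval (fun i => ((x.1 i : ℕ) : ℝ)) p)
      = ∑ m ∈ p.support, fun x : {x : ∀ i, Fin (k i) // ∑ i, (x i : ℕ) = w} =>
          eval (fun i => ((x.1 i : ℕ) : ℝ)) (monomial m (coeff m p)) := by
    funext x
    rw [Finset.sum_apply]
    conv_lhs => rw [← p.support_sum_monomial_coeff]
    rw [map_sum]
  rw [hrw]
  refine Submodule.sum_mem _ fun m hm => ?_
  have hwt : ∑ i, m i ≤ e := by
    have h1 := le_totalDegree hm
    have h2 : m.sum (fun _ e => e) = ∑ i, m i := Finsupp.sum_fintype _ _ fun _ => rfl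
    omega
  have hsmul : (fun x : {x : ∀ i, Fin (k i) // ∑ i, (x i : ℕ) = w} =>
      eval (fun i => ((x.1 i : ℕ) : ℝ)) (monomial m (coeff m p)))
      = (coeff m p) • fun x : {x : ∀ i, Fin (k i) // ∑ i, (x i : ℕ) = w} =>
          ∏ i, ((x.1 i : ℕ) : ℝ) ^ m i := by
    funext x
    rw [eval_monomial, Pi.smul_apply, smul_eq_mul]
    congr 1
    exact Finsupp.prod_fintype _ _ fun _ => pow_zero _
  rw [hsmul]
  refine Submodule.smul_mem _ _ ?_
  obtain ⟨E, hE, hdegE, hzE⟩ := prod_decomp n (fun i => m i) Finset.univ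
  have hkey : (fun x : {x : ∀ i, Fin (k i) // ∑ i, (x i : ℕ) = w} =>
        ∏ i, ((x.1 i : ℕ) : ℝ) ^ m i)
      = (fun x : {x : ∀ i, Fin (k i) // ∑ i, (x i : ℕ) = w} =>
          Yeval n (fun i => m i) fun i => ((x.1 i : ℕ) : ℝ))
        - fun x : {x : ∀ i, Fin (k i) // ∑ i, (x i : ℕ) = w} =>
            eval (fun i => ((x.1 i : ℕ) : ℝ)) E := by
    funext x
    have := congrArg (eval (fun i => ((x.1 i : ℕ) : ℝ))) hE
    rw [map_add, eval_Fprod] at this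
    simp only [map_prod, eval_pow, eval_X] at this
    simp [Pi.sub_apply]
    linarith [this]
  rw [hkey]
  refine Submodule.sub_mem _ ?_ ?_
  · exact Submodule.subset_span ⟨fun i => m i, hwt, rfl⟩
  · rcases Nat.eq_zero_or_pos (∑ i, m i) with h0 | h0
    · rw [hzE h0]
      have : (fun x : {x : ∀ i, Fin (k i) // ∑ i, (x i : ℕ) = w} =>
          eval (fun i => ((x.1 i : ℕ) : ℝ)) (0 : MvPolynomial (Fin n) ℝ)) = 0 := by
        funext x; simp
      rw [this]; exact Submodule.zero_mem _
    · have he : 1 ≤ e := le_trans h0 hwt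
      have hmem := ih (e - 1) (by omega) E (by omega)
      refine Submodule.span_mono ?_ hmem
      exact Set.image_mono fun β hβ => by
        simp only [Set.mem_setOf_eq] at hβ ⊢; omega

lemma Yeval_update (n : ℕ) (β : Fin n → ℕ) (i : Fin n) (y : Fin n → ℝ) :
    Yeval n (Function.update β i (β i + 1)) y = Yeval n β y * (y i - β i) := by
  unfold Yeval
  rw [← Finset.prod_erase_mul _ _ (Finset.mem_univ i),
      ← Finset.prod_erase_mul _ _ (Finset.mem_univ i)]
  have herase : ∏ j ∈ Finset.univ.erase i, ∏ t ∈ Finset.range (Function.update β i (β i + 1) j),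
      (y j - (t : ℝ)) = ∏ j ∈ Finset.univ.erase i, ∏ t ∈ Finset.range (β j), (y j - (t : ℝ)) := by
    refine Finset.prod_congr rfl fun j hj => ?_
    rw [Function.update_of_ne (Finset.ne_of_mem_erase hj)]
  rw [herase, Function.update_self, Finset.prod_range_succ]
  ring

/-- Claim B: the restriction of any `Yeval β` with `wt β ≤ d` lies in the target span. -/
lemma claimB (n : ℕ) (k : Fin n → ℕ) (d w : ℕ) (hdw : d < w) :
    ∀ j : ℕ, ∀ β : Fin n → ℕ, (∑ i, β i) + j = d →
      (fun x : {x : ∀ i, Fin (k i) // ∑ i, (x i : ℕ) = w} =>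
        Yeval n β fun i => ((x.1 i : ℕ) : ℝ))
      ∈ Submodule.span ℝ (Set.range
        (fun α : {α : ∀ i, Fin (k i) // ∑ i, (α i : ℕ) = d} =>
          (fun x : {x : ∀ i, Fin (k i) // ∑ i, (x i : ℕ) = w} =>
            Yeval n (fun i => (α.1 i : ℕ)) (fun i => ((x.1 i : ℕ) : ℝ))))) := by
  intro j
  induction j with
  | zero =>
    intro β hβ
    by_cases hg : ∀ i, β i < k i
    · refine Submodule.subset_span ⟨⟨fun i => ⟨β i, hg i⟩, by simpa using hβ⟩, rfl⟩
    · push_neg at hg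
      obtain ⟨i, hi⟩ := hg
      have hzero : (fun x : {x : ∀ i, Fin (k i) // ∑ i, (x i : ℕ) = w} =>
          Yeval n β fun i => ((x.1 i : ℕ) : ℝ)) = 0 := by
        funext x
        refine Finset.prod_eq_zero (Finset.mem_univ i) ?_
        refine Finset.prod_eq_zero (Finset.mem_range.mpr ?_) (sub_self _)
        exact lt_of_lt_of_le (x.1 i).2 hi
      rw [hzero]; exact Submodule.zero_mem _
  | succ j ih =>
    intro β hβ
    have hlt : ∑ i, β i < w := by omega
    have hne : ((w : ℝ) - (∑ i, β i : ℕ)) ≠ 0 := by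
      have : ((∑ i, β i : ℕ) : ℝ) < (w : ℝ) := by exact_mod_cast hlt
      linarith
    have key : (fun x : {x : ∀ i, Fin (k i) // ∑ i, (x i : ℕ) = w} =>
          Yeval n β fun i => ((x.1 i : ℕ) : ℝ))
        = ((w : ℝ) - (∑ i, β i : ℕ))⁻¹ •
          ∑ i : Fin n, (fun x : {x : ∀ i, Fin (k i) // ∑ i, (x i : ℕ) = w} =>
            Yeval n (Function.update β i (β i + 1)) fun i => ((x.1 i : ℕ) : ℝ)) := by
      funext x
      have hsum : ∑ i, ((x.1 i : ℕ) : ℝ) = (w : ℝ) := by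
        rw [← Nat.cast_sum, x.2]
      simp only [Pi.smul_apply, Finset.sum_apply, smul_eq_mul]
      rw [Finset.sum_congr rfl fun i _ => Yeval_update n β i _]
      rw [← Finset.mul_sum, Finset.sum_sub_distrib, hsum, ← Nat.cast_sum]
      rw [mul_comm, mul_inv_cancel_right₀ hne]
    rw [key]
    refine Submodule.smul_mem _ _ (Submodule.sum_mem _ fun i _ => ?_)
    refine ih (Function.update β i (β i + 1)) ?_
    have hupd : ∑ j', Function.update β i (β i + 1) j' = (∑ j', β j') + 1 := by
      rw [Finset.sum_update_of_mem (Finset.mem_univ i)]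
      have h2 := Finset.add_sum_erase Finset.univ β (Finset.mem_univ i)
      rw [Finset.erase_eq] at h2
      omega
    omega

/-- Every function on the layer of weight `w` of a uniform grid that is represented by a
polynomial of degree at most `d < w` lies in the span of the restrictions of the
falling-factorial monomials `Y^(α)` with `wt(α) = d`. -/
theorem stmt_6 (n : ℕ) (k : Fin n → ℕ) (hk : ∀ i, 2 ≤ k i)
    (N : ℕ) (hN : N = ∑ i, (k i - 1)) (d w : ℕ) (hdw : d < w) (hw : w ≤ N)
    (f : {x : ∀ i, Fin (k i) // ∑ i, (x i : ℕ) = w} → ℝ)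
    (hf : ∃ p : MvPolynomial (Fin n) ℝ, p.totalDegree ≤ d ∧
      ∀ x : {x : ∀ i, Fin (k i) // ∑ i, (x i : ℕ) = w},
        f x = MvPolynomial.eval (fun i => ((x.1 i : ℕ) : ℝ)) p) :
    f ∈ Submodule.span ℝ (Set.range
      (fun α : {α : ∀ i, Fin (k i) // ∑ i, (α i : ℕ) = d} =>
        (fun x : {x : ∀ i, Fin (k i) // ∑ i, (x i : ℕ) = w} =>
          Yeval n (fun i => (α.1 i : ℕ)) (fun i => ((x.1 i : ℕ) : ℝ))))) := by
  obtain ⟨p, hpd, hpf⟩ := hf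
  have hfeq : f = fun x : {x : ∀ i, Fin (k i) // ∑ i, (x i : ℕ) = w} =>
      MvPolynomial.eval (fun i => ((x.1 i : ℕ) : ℝ)) p := funext hpf
  rw [hfeq]
  have hA := claimA n k w d p hpd
  have hle : Submodule.span ℝ ((fun β : Fin n → ℕ =>
      (fun x : {x : ∀ i, Fin (k i) // ∑ i, (x i : ℕ) = w} =>
        Yeval n β fun i => ((x.1 i : ℕ) : ℝ))) '' {β | ∑ i, β i ≤ d})
      ≤ Submodule.span ℝ (Set.range
        (fun α : {α : ∀ i, Fin (k i) // ∑ i, (α i : ℕ) = d} =>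
          (fun x : {x : ∀ i, Fin (k i) // ∑ i, (x i : ℕ) = w} =>
            Yeval n (fun i => (α.1 i : ℕ)) (fun i => ((x.1 i : ℕ) : ℝ))))) := by
    rw [Submodule.span_le]
    rintro _ ⟨β, hβ, rfl⟩
    exact claimB n k d w hdw (d - ∑ i, β i) β (by simp only [Set.mem_setOf_eq] at hβ; omega)
  exact hle hA
end

section
/- Let G be a uniform grid and d < w ≤ ⌊N/2⌋. Then the evaluation matrix Ev_{d,w}, with entries Y^(α)(β) = α!·binom(β,α) for α of weight d and β of weight w, has full rank equal to [G choose d], assuming that the up operator matrices U_{t,t+1} between consecutive layers all have full rank. -/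
open scoped Classical

/-- The layer of weight `t` of the uniform grid `[0,k₁-1] × ⋯ × [0,kₙ-1]`. -/
abbrev Layer (n : ℕ) (k : Fin n → ℕ) (t : ℕ) : Type :=
  {x : ∀ i, Fin (k i) // ∑ i, (x i : ℕ) = t}

/-- The up operator matrix `U_{t,t+1}` between consecutive layers. -/
noncomputable def Umat (n : ℕ) (k : Fin n → ℕ) (t : ℕ) :
    Matrix (Layer n k t) (Layer n k (t + 1)) ℝ := fun α β =>
  if ∀ i, (α.1 i : ℕ) ≤ (β.1 i : ℕ) then 1 else 0

/-- The evaluation matrix `Ev_{d,w}` with entries `Y^(α)(β) = α!·C(β,α)`. -/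
noncomputable def EvMat (n : ℕ) (k : Fin n → ℕ) (d w : ℕ) :
    Matrix (Layer n k d) (Layer n k w) ℝ := fun α β =>
  ∏ i, ∏ t ∈ Finset.range (α.1 i : ℕ), (((β.1 i : ℕ) : ℝ) - (t : ℝ))

/-! ### Symmetric unimodal sequences -/

/-- `a : ℤ → ℕ` is symmetric about `N/2`, vanishes on negatives, and is increasing
up to the center. -/
def SU (a : ℤ → ℕ) (N : ℤ) : Prop :=
  (∀ t : ℤ, a t = a (N - t)) ∧ (∀ t : ℤ, t < 0 → a t = 0) ∧
  (∀ t : ℤ, 2 * (t + 1) ≤ N → a t ≤ a (t + 1))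

lemma SU.chain {a : ℤ → ℕ} {N : ℤ} (h : SU a N) :
    ∀ (m : ℕ) (u : ℤ), 2 * (u + m) ≤ N → a u ≤ a (u + m) := by
  intro m
  induction m with
  | zero => intro u _; simp
  | succ m ih =>
    intro u hu
    have h1 : a u ≤ a (u + m) := ih u (by push_cast at hu ⊢; linarith)
    have h2 : a (u + m) ≤ a (u + m + 1) := h.2.2 (u + m) (by push_cast at hu ⊢; linarith)
    have e : u + ((m : ℤ) + 1) = u + m + 1 := by ring
    push_cast
    rw [e]
    exact h1.trans h2

lemma SU.mono {a : ℤ → ℕ} {N : ℤ} (h : SU a N) {u v : ℤ} (huv : u ≤ v) (hN : u + v ≤ N) :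
    a u ≤ a v := by
  by_cases hv : 2 * v ≤ N
  · have : v = u + ((v - u).toNat : ℤ) := by omega
    rw [this]
    exact h.chain _ u (by omega)
  · have hsym : a v = a (N - v) := h.1 v
    rw [hsym]
    have : N - v = u + ((N - v - u).toNat : ℤ) := by omega
    rw [this]
    exact h.chain _ u (by omega)

lemma SU.conv {a : ℤ → ℕ} {N : ℤ} (h : SU a N) (m : ℕ) :
    SU (fun t => ∑ j ∈ Finset.range (m + 1), a (t - j)) (N + m) := by
  refine ⟨?_, ?_, ?_⟩
  · intro t
    simp only
    rw [← Finset.sum_range_reflect (fun j => a (N + m - t - j)) (m + 1)]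
    refine Finset.sum_congr rfl fun j hj => ?_
    have hj' : j < m + 1 := Finset.mem_range.1 hj
    have e : ((m + 1 - 1 - j : ℕ) : ℤ) = (m : ℤ) - j := by omega
    rw [e]
    rw [h.1 (t - j)]
    congr 1
    ring
  · intro t ht
    simp only
    refine Finset.sum_eq_zero fun j _ => h.2.1 _ (by omega)
  · intro t ht
    simp only
    rw [Finset.sum_range_succ' (fun j => a (t + 1 - j)) m, Finset.sum_range_succ]
    have e2 : ∑ j ∈ Finset.range m, a (t + 1 - ((j : ℕ) + 1 : ℕ)) =
        ∑ j ∈ Finset.range m, a (t - j) := by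
      refine Finset.sum_congr rfl fun j _ => ?_
      congr 1
      push_cast
      ring
    rw [e2]
    simp only [Nat.cast_zero, sub_zero]
    have key : a (t - m) ≤ a (t + 1) := h.mono (by omega) (by omega)
    omega

/-! ### Counting grid points by weight -/

noncomputable def gcnt (n : ℕ) (k : Fin n → ℕ) (t : ℤ) : ℕ :=
  (Finset.univ.filter (fun x : ∀ i, Fin (k i) => (∑ i, ((x i : ℕ) : ℤ)) = t)).card

lemma gcnt_succ (n : ℕ) (k : Fin (n + 1) → ℕ) (t : ℤ) :
    gcnt (n + 1) k t = ∑ j ∈ Finset.range (k 0), gcnt n (fun i => k i.succ) (t - j) := by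
  have h1 : gcnt (n + 1) k t =
      ∑ x : ∀ i, Fin (k i), if (∑ i, ((x i : ℕ) : ℤ)) = t then 1 else 0 := by
    rw [gcnt, Finset.card_filter]
  rw [h1, ← Equiv.sum_comp (Fin.consEquiv (fun i => Fin (k i)))]
  rw [Fintype.sum_prod_type]
  have h2 : ∀ (j : Fin (k 0)) (y : ∀ i : Fin n, Fin (k i.succ)),
      (∑ i, (((Fin.consEquiv (fun i => Fin (k i))) (j, y) i : ℕ) : ℤ)) =
        (j : ℕ) + ∑ i, ((y i : ℕ) : ℤ) := by
    intro j y
    rw [Fin.sum_univ_succ]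
    simp [Fin.consEquiv]
  have h3 : ∀ j : Fin (k 0),
      (∑ y : ∀ i : Fin n, Fin (k i.succ),
        if (((Fin.consEquiv (fun i => Fin (k i))) (j, y) : ∀ i, Fin (k i)) ∈ Set.univ ∧
          True) then 0 else 0) = 0 := by intro _; simp
  have h4 : ∀ j : Fin (k 0),
      (∑ y : ∀ i : Fin n, Fin (k i.succ),
        if (∑ i, (((Fin.consEquiv (fun i => Fin (k i))) (j, y) i : ℕ) : ℤ)) = t then 1 else 0)
      = gcnt n (fun i => k i.succ) (t - (j : ℕ)) := by
    intro j
    rw [gcnt, Finset.card_filter]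
    refine Finset.sum_congr rfl fun y _ => ?_
    rw [h2 j y]
    have hiff : ((j : ℕ) : ℤ) + ∑ i, ((y i : ℕ) : ℤ) = t ↔
        (∑ i, ((y i : ℕ) : ℤ)) = t - ((j : ℕ) : ℤ) := by
      constructor <;> intro h <;> linarith
    simp only [hiff]
  calc ∑ j : Fin (k 0), ∑ y : ∀ i : Fin n, Fin (k i.succ),
        (if (∑ i, (((Fin.consEquiv (fun i => Fin (k i))) (j, y) i : ℕ) : ℤ)) = t then 1 else 0)
      = ∑ j : Fin (k 0), gcnt n (fun i => k i.succ) (t - (j : ℕ)) :=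
        Finset.sum_congr rfl fun j _ => h4 j
    _ = ∑ j ∈ Finset.range (k 0), gcnt n (fun i => k i.succ) (t - j) :=
        Fin.sum_univ_eq_sum_range (fun j => gcnt n (fun i => k i.succ) (t - (j : ℕ))) (k 0)

lemma gcnt_su : ∀ (n : ℕ) (k : Fin n → ℕ), (∀ i, 1 ≤ k i) →
    SU (gcnt n k) (∑ i, ((k i : ℤ) - 1)) := by
  intro n
  induction n with
  | zero =>
    intro k _
    have hval : ∀ t : ℤ, gcnt 0 k t = if t = 0 then 1 else 0 := by
      intro t
      rw [gcnt]
      by_cases ht : t = 0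
      · subst ht
        simp
      · rw [Finset.filter_false_of_mem, Finset.card_empty]
        · simp [ht]
        · intro x _
          simp only [Finset.univ_eq_empty, Finset.sum_empty]
          omega
    refine ⟨?_, ?_, ?_⟩
    · intro t
      simp only [Finset.univ_eq_empty, Finset.sum_empty] at *
      rw [hval, hval]
      simp only [zero_sub]
      by_cases ht : t = 0
      · subst ht; norm_num
      · rw [if_neg ht, if_neg (show ¬ -t = 0 by omega)]
    · intro t ht
      rw [hval]
      rw [if_neg (show ¬ t = 0 by omega)]
    · intro t ht
      simp only [Finset.univ_eq_empty, Finset.sum_empty] at ht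
      rw [hval t, if_neg (show ¬ t = 0 by omega)]
      exact Nat.zero_le _
  | succ n ih =>
    intro k hk
    have h := (ih (fun i => k i.succ) (fun i => hk i.succ)).conv (k 0 - 1)
    have hk0 : k 0 - 1 + 1 = k 0 := by have := hk 0; omega
    have hN : (∑ i : Fin n, ((k i.succ : ℤ) - 1)) + ((k 0 - 1 : ℕ) : ℤ) =
        ∑ i : Fin (n + 1), ((k i : ℤ) - 1) := by
      rw [Fin.sum_univ_succ]
      have : ((k 0 - 1 : ℕ) : ℤ) = (k 0 : ℤ) - 1 := by have := hk 0; omega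
      rw [this]
      ring
    rw [hk0, hN] at h
    have hfun : (fun t => ∑ j ∈ Finset.range (k 0), gcnt n (fun i => k i.succ) (t - j)) =
        gcnt (n + 1) k := by
      funext t
      rw [gcnt_succ]
    rwa [hfun] at h

lemma gcnt_eq_card (n : ℕ) (k : Fin n → ℕ) (t : ℕ) :
    gcnt n k (t : ℤ) = Fintype.card (Layer n k t) := by
  rw [Fintype.card_subtype, gcnt]
  congr 1
  refine Finset.filter_congr fun x _ => ?_
  constructor
  · intro hx
    have : ((∑ i, (x i : ℕ) : ℕ) : ℤ) = (t : ℤ) := by push_cast; exact hx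
    exact_mod_cast this
  · intro hx
    push_cast [← hx]
    simp

lemma card_layer_mono (n : ℕ) (k : Fin n → ℕ) (hk : ∀ i, 1 ≤ k i) (N : ℕ)
    (hN : N = ∑ i, (k i - 1)) (t : ℕ) (ht : 2 * (t + 1) ≤ N) :
    Fintype.card (Layer n k t) ≤ Fintype.card (Layer n k (t + 1)) := by
  have hsu := gcnt_su n k hk
  have hNZ : (N : ℤ) = ∑ i, ((k i : ℤ) - 1) := by
    rw [hN]
    push_cast [Nat.cast_sum]
    refine Finset.sum_congr rfl fun i _ => ?_
    have := hk i
    omega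
  have h := hsu.2.2 (t : ℤ) (by rw [← hNZ]; exact_mod_cast ht)
  rw [show ((t : ℤ) + 1) = ((t + 1 : ℕ) : ℤ) by push_cast; ring] at h
  rwa [gcnt_eq_card, gcnt_eq_card] at h

/-! ### Basic facts about `EvMat` -/

lemma prod_range_sub_ne_zero {a : ℕ} {b : ℕ} (h : a ≤ b) :
    ∏ t ∈ Finset.range a, ((b : ℝ) - (t : ℝ)) ≠ 0 := by
  refine Finset.prod_ne_zero_iff.2 fun t ht => ?_
  have ht' : t < a := Finset.mem_range.1 ht
  have : (t : ℝ) < (b : ℝ) := by exact_mod_cast lt_of_lt_of_le ht' h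
  linarith

lemma prod_range_sub_eq_zero {a b : ℕ} (h : b < a) :
    ∏ t ∈ Finset.range a, ((b : ℝ) - (t : ℝ)) = 0 :=
  Finset.prod_eq_zero (Finset.mem_range.2 h) (by simp)

lemma EvMat_eq_zero {n : ℕ} {k : Fin n → ℕ} {d w : ℕ} (α : Layer n k d) (β : Layer n k w)
    (i : Fin n) (h : (β.1 i : ℕ) < (α.1 i : ℕ)) : EvMat n k d w α β = 0 :=
  Finset.prod_eq_zero (Finset.mem_univ i) (prod_range_sub_eq_zero h)

lemma layer_eq_of_le {n : ℕ} {k : Fin n → ℕ} {w : ℕ} (α β : Layer n k w)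
    (h : ∀ i, (α.1 i : ℕ) ≤ (β.1 i : ℕ)) : α = β := by
  refine Subtype.ext (funext fun i => ?_)
  by_contra hne
  have hlt : (α.1 i : ℕ) < (β.1 i : ℕ) := by
    rcases lt_or_eq_of_le (h i) with h' | h'
    · exact h'
    · exact absurd (Fin.ext h') hne
  have : ∑ j, (α.1 j : ℕ) < ∑ j, (β.1 j : ℕ) :=
    Finset.sum_lt_sum (fun j _ => h j) ⟨i, Finset.mem_univ i, hlt⟩
  rw [α.2, β.2] at this
  exact lt_irrefl _ this

lemma EvMat_self_diag (n : ℕ) (k : Fin n → ℕ) (w : ℕ) :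
    EvMat n k w w = Matrix.diagonal
      (fun α : Layer n k w => ∏ i, ∏ t ∈ Finset.range (α.1 i : ℕ),
        (((α.1 i : ℕ) : ℝ) - (t : ℝ))) := by
  ext α β
  by_cases h : α = β
  · subst h
    rw [Matrix.diagonal_apply_eq, EvMat]
  · rw [Matrix.diagonal_apply_ne _ h]
    have : ¬ ∀ i, (α.1 i : ℕ) ≤ (β.1 i : ℕ) := fun hle => h (layer_eq_of_le α β hle)
    push_neg at this
    obtain ⟨i, hi⟩ := this
    exact EvMat_eq_zero α β i hi

lemma EvMat_self_rank (n : ℕ) (k : Fin n → ℕ) (w : ℕ) :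
    (EvMat n k w w).rank = Fintype.card (Layer n k w) := by
  rw [EvMat_self_diag]
  refine Matrix.rank_of_isUnit _ ?_
  rw [Matrix.isUnit_iff_isUnit_det, Matrix.det_diagonal]
  refine (Finset.prod_ne_zero_iff.2 fun α _ => ?_).isUnit
  exact Finset.prod_ne_zero_iff.2 fun i _ => prod_range_sub_ne_zero le_rfl

/-! ### The key identity `U_d * Ev_{d+1,w} = (w - d) • Ev_{d,w}` -/

lemma exists_bump {n : ℕ} {k : Fin n → ℕ} {d : ℕ} (α : Layer n k d) (γ : Layer n k (d + 1))
    (h : ∀ i, (α.1 i : ℕ) ≤ (γ.1 i : ℕ)) :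
    ∃ i, (γ.1 i : ℕ) = (α.1 i : ℕ) + 1 ∧ ∀ j, j ≠ i → (γ.1 j : ℕ) = (α.1 j : ℕ) := by
  set g : Fin n → ℕ := fun i => (γ.1 i : ℕ) - (α.1 i : ℕ) with hg
  have hsum : ∑ i, g i = 1 := by
    have h1 : ∑ i, ((α.1 i : ℕ) + g i) = ∑ i, (γ.1 i : ℕ) := by
      refine Finset.sum_congr rfl fun i _ => ?_
      have := h i
      simp only [hg]
      omega
    rw [Finset.sum_add_distrib, α.2, γ.2] at h1
    omega
  obtain ⟨i, _, hi⟩ := Finset.exists_ne_zero_of_sum_ne_zero (by rw [hsum]; exact one_ne_zero)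
  have h2 : g i + ∑ j ∈ Finset.univ.erase i, g j = 1 := by
    rw [Finset.add_sum_erase _ _ (Finset.mem_univ i), hsum]
  have hgi : g i = 1 := by omega
  have hrest : ∑ j ∈ Finset.univ.erase i, g j = 0 := by omega
  refine ⟨i, ?_, ?_⟩
  · have := h i
    simp only [hg] at hgi
    omega
  · intro j hj
    have : g j = 0 := by
      have := (Finset.sum_eq_zero_iff.1 hrest) j (Finset.mem_erase.2 ⟨hj, Finset.mem_univ j⟩)
      exact this
    have hle := h j
    simp only [hg] at this
    omega

noncomputable def bump {n : ℕ} {k : Fin n → ℕ} {d : ℕ} (α : Layer n k d) (i : Fin n)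
    (hi : (α.1 i : ℕ) + 1 < k i) : Layer n k (d + 1) := by
  refine ⟨Function.update α.1 i ⟨(α.1 i : ℕ) + 1, hi⟩, ?_⟩
  have h1 : ∀ j, ((Function.update α.1 i ⟨(α.1 i : ℕ) + 1, hi⟩ : ∀ j, Fin (k j)) j : ℕ) =
      Function.update (fun j => (α.1 j : ℕ)) i ((α.1 i : ℕ) + 1) j := by
    intro j
    exact Function.apply_update (fun j (a : Fin (k j)) => (a : ℕ)) α.1 i _ j
  calc ∑ j, ((Function.update α.1 i ⟨(α.1 i : ℕ) + 1, hi⟩ : ∀ j, Fin (k j)) j : ℕ)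
      = ∑ j, Function.update (fun j => (α.1 j : ℕ)) i ((α.1 i : ℕ) + 1) j :=
        Finset.sum_congr rfl fun j _ => h1 j
    _ = ((α.1 i : ℕ) + 1) + ∑ j ∈ Finset.univ \ {i}, (α.1 j : ℕ) :=
        Finset.sum_update_of_mem (Finset.mem_univ i) _ _
    _ = d + 1 := by
        have h2 : (α.1 i : ℕ) + ∑ j ∈ Finset.univ.erase i, (α.1 j : ℕ) = ∑ j, (α.1 j : ℕ) :=
          Finset.add_sum_erase Finset.univ (fun j => ((α.1 j : ℕ))) (Finset.mem_univ i)
        rw [← Finset.erase_eq]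
        rw [α.2] at h2
        omega

lemma Ev_bump {n : ℕ} {k : Fin n → ℕ} {d w : ℕ} (α : Layer n k d) (β : Layer n k w)
    (i : Fin n) (hi : (α.1 i : ℕ) + 1 < k i) :
    EvMat n k (d + 1) w (bump α i hi) β =
      EvMat n k d w α β * (((β.1 i : ℕ) : ℝ) - ((α.1 i : ℕ) : ℝ)) := by
  set base : Fin n → ℝ := fun j => ∏ t ∈ Finset.range (α.1 j : ℕ), (((β.1 j : ℕ) : ℝ) - t)
    with hbase
  have h1 : EvMat n k (d + 1) w (bump α i hi) β =
      ∏ j, Function.update base i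
        (∏ t ∈ Finset.range ((α.1 i : ℕ) + 1), (((β.1 i : ℕ) : ℝ) - t)) j := by
    rw [EvMat]
    refine Finset.prod_congr rfl fun j _ => ?_
    show (∏ t ∈ Finset.range (((bump α i hi).1 j : ℕ)), (((β.1 j : ℕ) : ℝ) - t)) = _
    have := Function.apply_update
      (fun j (a : Fin (k j)) => ∏ t ∈ Finset.range (a : ℕ), (((β.1 j : ℕ) : ℝ) - t))
      α.1 i ⟨(α.1 i : ℕ) + 1, hi⟩ j
    exact this
  rw [h1, Finset.prod_update_of_mem (Finset.mem_univ i), Finset.prod_range_succ]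
  have h2 : EvMat n k d w α β = base i * ∏ j ∈ Finset.univ.erase i, base j :=
    (Finset.mul_prod_erase _ _ (Finset.mem_univ i)).symm
  rw [h2, ← Finset.erase_eq]
  ring

lemma key_id (n : ℕ) (k : Fin n → ℕ) (d w : ℕ) :
    Umat n k d * EvMat n k (d + 1) w = (((w : ℝ) - (d : ℝ))) • EvMat n k d w := by
  ext α β
  rw [Matrix.mul_apply, Matrix.smul_apply, smul_eq_mul]
  have step1 : ∑ γ : Layer n k (d + 1), Umat n k d α γ * EvMat n k (d + 1) w γ β
      = ∑ γ ∈ Finset.univ.filter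
          (fun γ : Layer n k (d + 1) => ∀ i, (α.1 i : ℕ) ≤ (γ.1 i : ℕ)),
          EvMat n k (d + 1) w γ β := by
    rw [Finset.sum_filter]
    refine Finset.sum_congr rfl fun γ _ => ?_
    rw [Umat]
    by_cases h : ∀ i, (α.1 i : ℕ) ≤ (γ.1 i : ℕ) <;> simp [h]
  rw [step1]
  have step2 : ∑ γ ∈ Finset.univ.filter
        (fun γ : Layer n k (d + 1) => ∀ i, (α.1 i : ℕ) ≤ (γ.1 i : ℕ)),
        EvMat n k (d + 1) w γ β
      = ∑ i ∈ Finset.univ.filter (fun i : Fin n => (α.1 i : ℕ) + 1 < k i),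
          EvMat n k d w α β * (((β.1 i : ℕ) : ℝ) - ((α.1 i : ℕ) : ℝ)) := by
    refine Finset.sum_bij'
      (fun γ hγ => (exists_bump α γ (Finset.mem_filter.1 hγ).2).choose)
      (fun i hi => bump α i (Finset.mem_filter.1 hi).2) ?_ ?_ ?_ ?_ ?_
    · intro γ hγ
      obtain ⟨h1, _⟩ := (exists_bump α γ (Finset.mem_filter.1 hγ).2).choose_spec
      refine Finset.mem_filter.2 ⟨Finset.mem_univ _, ?_⟩
      rw [← h1]
      exact (γ.1 _).isLt
    · intro i hi
      refine Finset.mem_filter.2 ⟨Finset.mem_univ _, fun j => ?_⟩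
      show (α.1 j : ℕ) ≤ ((Function.update α.1 i _ : ∀ j, Fin (k j)) j : ℕ)
      by_cases h : j = i
      · subst h
        rw [Function.update_self]
        exact Nat.le_succ _
      · rw [Function.update_of_ne h]
    · intro γ hγ
      obtain ⟨h1, h2⟩ := (exists_bump α γ (Finset.mem_filter.1 hγ).2).choose_spec
      refine Subtype.ext (funext fun j => ?_)
      set i := (exists_bump α γ (Finset.mem_filter.1 hγ).2).choose
      show (Function.update α.1 i _ : ∀ j, Fin (k j)) j = γ.1 j
      by_cases h : j = i
      · subst h
        rw [Function.update_self]
        exact Fin.ext (show (α.1 i : ℕ) + 1 = (γ.1 i : ℕ) from h1.symm)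
      · rw [Function.update_of_ne h]
        exact Fin.ext (h2 j h).symm
    · intro i hi
      set γ := bump α i (Finset.mem_filter.1 hi).2 with hγdef
      have hmem : γ ∈ Finset.univ.filter
          (fun γ : Layer n k (d + 1) => ∀ j, (α.1 j : ℕ) ≤ (γ.1 j : ℕ)) := by
        refine Finset.mem_filter.2 ⟨Finset.mem_univ _, fun j => ?_⟩
        show (α.1 j : ℕ) ≤ ((Function.update α.1 i _ : ∀ j, Fin (k j)) j : ℕ)
        by_cases h : j = i
        · subst h
          rw [Function.update_self]
          exact Nat.le_succ _
        · rw [Function.update_of_ne h]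
      obtain ⟨h1, h2⟩ := (exists_bump α γ (Finset.mem_filter.1 hmem).2).choose_spec
      by_contra hne
      have := h2 i (fun hh => hne hh.symm)
      have hgi : (γ.1 i : ℕ) = (α.1 i : ℕ) + 1 := by
        show ((Function.update α.1 i ⟨(α.1 i : ℕ) + 1, _⟩ : ∀ j, Fin (k j)) i : ℕ) = _
        rw [Function.update_self]
      omega
    · intro γ hγ
      obtain ⟨h1, h2⟩ := (exists_bump α γ (Finset.mem_filter.1 hγ).2).choose_spec
      set i := (exists_bump α γ (Finset.mem_filter.1 hγ).2).choose
      have hge : γ = bump α i (by rw [← h1]; exact (γ.1 i).isLt) := by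
        refine Subtype.ext (funext fun j => ?_)
        show γ.1 j = (Function.update α.1 i _ : ∀ j, Fin (k j)) j
        by_cases h : j = i
        · subst h
          rw [Function.update_self]
          exact Fin.ext h1
        · rw [Function.update_of_ne h]
          exact Fin.ext (h2 j h)
      show EvMat n k (d + 1) w γ β =
        EvMat n k d w α β * (((β.1 i : ℕ) : ℝ) - ((α.1 i : ℕ) : ℝ))
      rw [hge]
      exact Ev_bump α β i _
  rw [step2]
  have step3 : ∑ i ∈ Finset.univ.filter (fun i : Fin n => (α.1 i : ℕ) + 1 < k i),
        EvMat n k d w α β * (((β.1 i : ℕ) : ℝ) - ((α.1 i : ℕ) : ℝ))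
      = ∑ i : Fin n, EvMat n k d w α β * (((β.1 i : ℕ) : ℝ) - ((α.1 i : ℕ) : ℝ)) := by
    refine Finset.sum_subset (Finset.filter_subset _ _) fun i _ hi => ?_
    have hai : (α.1 i : ℕ) + 1 = k i := by
      have h1 := (α.1 i).isLt
      have h2 : ¬ ((α.1 i : ℕ) + 1 < k i) := fun hh =>
        hi (Finset.mem_filter.2 ⟨Finset.mem_univ _, hh⟩)
      omega
    have hble : (β.1 i : ℕ) ≤ (α.1 i : ℕ) := by
      have := (β.1 i).isLt
      omega
    rcases lt_or_eq_of_le hble with h | h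
    · rw [EvMat_eq_zero α β i h, zero_mul]
    · rw [h]
      simp
  rw [step3, ← Finset.mul_sum, Finset.sum_sub_distrib]
  have hb : ∑ i, (((β.1 i : ℕ) : ℝ)) = (w : ℝ) := by
    rw [← Nat.cast_sum, β.2]
  have ha : ∑ i, (((α.1 i : ℕ) : ℝ)) = (d : ℝ) := by
    rw [← Nat.cast_sum, α.2]
  rw [hb, ha]
  ring

/-! ### Rank lemmas -/

lemma rank_smul_ne_zero {m l : Type*} [Fintype l] (c : ℝ) (hc : c ≠ 0) (M : Matrix m l ℝ) :
    (c • M).rank = M.rank := by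
  have h : (c • M).mulVecLin = c • M.mulVecLin := by
    ext v i
    simp [Matrix.mulVecLin, Matrix.smul_mulVec]
  rw [Matrix.rank, Matrix.rank, h, LinearMap.range_smul _ _ hc]

lemma rank_mul_of_surjective {a b c : Type*} [Fintype b] [Fintype c]
    (A : Matrix a b ℝ) (B : Matrix b c ℝ) (hB : Function.Surjective B.mulVecLin) :
    (A * B).rank = A.rank := by
  rw [Matrix.rank, Matrix.rank, Matrix.mulVecLin_mul, LinearMap.range_comp,
    LinearMap.range_eq_top.2 hB, Submodule.map_top]

/-! ### Main theorem -/

/-- If the up operator matrices between consecutive layers all have full rank, then for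
`d < w ≤ ⌊N/2⌋`, the evaluation matrix `Ev_{d,w}` has full rank `[G choose d]`. -/
theorem stmt_8 (n : ℕ) (k : Fin n → ℕ) (hk : ∀ i, 2 ≤ k i)
    (N : ℕ) (hN : N = ∑ i, (k i - 1)) (d w : ℕ) (hdw : d < w) (hw : w ≤ N / 2)
    (hU : ∀ t, (Umat n k t).rank =
      min (Fintype.card (Layer n k t)) (Fintype.card (Layer n k (t + 1)))) :
    (EvMat n k d w).rank = Fintype.card (Layer n k d) := by
  have hw2 : 2 * w ≤ N := by
    have := Nat.le_div_iff_mul_le (by norm_num : 0 < 2) |>.1 hw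
    omega
  have main : ∀ m d', d' + m = w → (EvMat n k d' w).rank = Fintype.card (Layer n k d') := by
    intro m
    induction m with
    | zero =>
      intro d' hd'
      have : d' = w := by omega
      subst this
      exact EvMat_self_rank n k d'
    | succ m ih =>
      intro d' hd'
      have hIH : (EvMat n k (d' + 1) w).rank = Fintype.card (Layer n k (d' + 1)) :=
        ih (d' + 1) (by omega)
      have hd'w : d' < w := by omega
      have hscal : ((w : ℝ) - (d' : ℝ)) ≠ 0 := by
        have : (d' : ℝ) < (w : ℝ) := by exact_mod_cast hd'w
        linarith
      have hsurj : Function.Surjective (EvMat n k (d' + 1) w).mulVecLin := by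
        rw [← LinearMap.range_eq_top]
        apply Submodule.eq_top_of_finrank_eq
        have : Module.finrank ℝ (LinearMap.range (EvMat n k (d' + 1) w).mulVecLin) =
            (EvMat n k (d' + 1) w).rank := rfl
        rw [this, hIH, Module.finrank_pi]
      have h1 : (EvMat n k d' w).rank = (Umat n k d' * EvMat n k (d' + 1) w).rank := by
        rw [key_id, rank_smul_ne_zero _ hscal]
      rw [h1, rank_mul_of_surjective _ _ hsurj, hU d']
      have hmono : Fintype.card (Layer n k d') ≤ Fintype.card (Layer n k (d' + 1)) := by
        refine card_layer_mono n k (fun i => le_trans (by norm_num) (hk i)) N hN d' ?_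
        omega
      exact min_eq_left hmono
  exact main (w - d) d (by omega)
end

section
/- Let G be a uniform grid, d ∈ [0,N], and E ⊆ [0,N] with |E| ≥ d+1. Then all layers of weight in [0, min E] ∪ [max E, N] are contained in the degree-d Z*-closure of E̲: [0,min E] ∪ [max E, N] ⊆ Z*-cl_{G,d}(E). -/
/-- The uniform grid `[0,k₁-1] × ⋯ × [0,kₙ-1]`, as a subset of `ℝⁿ`. -/
def gridSetR (n : ℕ) (k : Fin n → ℕ) : Set (Fin n → ℝ) :=
  {x | ∀ i, ∃ a : ℕ, a < k i ∧ x i = a}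

/-- The weight-determined set `E̲ = {x ∈ G : wt(x) ∈ E}`, as a subset of `ℝⁿ`. -/
def underlineR (n : ℕ) (k : Fin n → ℕ) (E : Set ℕ) : Set (Fin n → ℝ) :=
  {x | x ∈ gridSetR n k ∧ ∃ e ∈ E, ∑ i, x i = (e : ℝ)}

/-- The degree-`d` Zariski closure of `A` in the grid: the common zero set, in `G`,
of all polynomials of degree at most `d` vanishing on `A`. -/
def ZclR (n : ℕ) (k : Fin n → ℕ) (d : ℕ) (A : Set (Fin n → ℝ)) : Set (Fin n → ℝ) :=
  {x | x ∈ gridSetR n k ∧ ∀ p : MvPolynomial (Fin n) ℝ, p.totalDegree ≤ d →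
    (∀ a ∈ A, MvPolynomial.eval a p = 0) → MvPolynomial.eval x p = 0}

open Finset in
/-- Counting supersets of a fixed set among `w`-subsets, in cross-multiplied form. -/
lemma count_supersets_mul {ι : Type*} [DecidableEq ι] [Fintype ι] (S₀ : Finset ι) (w : ℕ) :
    ((Finset.univ.powersetCard w).filter (fun T => S₀ ⊆ T)).card
        * ((Fintype.card ι).choose S₀.card)
      = (Fintype.card ι).choose w * w.choose S₀.card := by
  classical
  set M := Fintype.card ι with hM
  set s := S₀.card with hs
  by_cases hsw : s ≤ w
  · by_cases hwM : w ≤ M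
    · have hbij : ((Finset.univ.powersetCard w).filter (fun T => S₀ ⊆ T)).card
          = (S₀ᶜ.powersetCard (w - s)).card := by
        apply Finset.card_bij' (fun T _ => T \ S₀) (fun U _ => U ∪ S₀)
        · intro T hT
          simp only [Finset.mem_filter, Finset.mem_powersetCard_univ] at hT
          rw [Finset.mem_powersetCard]
          constructor
          · intro i hi
            rw [Finset.mem_compl]
            exact (Finset.mem_sdiff.mp hi).2
          · rw [Finset.card_sdiff_of_subset hT.2, hT.1]
        · intro U hU
          rw [Finset.mem_powersetCard] at hU
          have hdisj : Disjoint U S₀ :=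
            Finset.disjoint_left.mpr fun a haU haS => (Finset.mem_compl.mp (hU.1 haU)) haS
          simp only [Finset.mem_filter, Finset.mem_powersetCard_univ]
          constructor
          · rw [Finset.card_union_of_disjoint hdisj, hU.2]
            omega
          · exact Finset.subset_union_right
        · intro T hT
          simp only [Finset.mem_filter, Finset.mem_powersetCard_univ] at hT
          exact Finset.sdiff_union_of_subset hT.2
        · intro U hU
          rw [Finset.mem_powersetCard] at hU
          have hdisj : Disjoint U S₀ :=
            Finset.disjoint_left.mpr fun a haU haS => (Finset.mem_compl.mp (hU.1 haU)) haS
          rw [Finset.union_sdiff_cancel_right hdisj]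
      rw [hbij, Finset.card_powersetCard, Finset.card_compl, ← hM, ← hs,
        Nat.choose_mul hsw, Nat.mul_comm]
    · have hempty : (Finset.univ.powersetCard w : Finset (Finset ι)) = ∅ := by
        rw [Finset.powersetCard_eq_empty, Finset.card_univ]
        omega
      rw [hempty, Finset.filter_empty, Finset.card_empty,
        Nat.choose_eq_zero_of_lt (by omega : M < w)]
      ring
  · have h1 : ((Finset.univ.powersetCard w).filter (fun T => S₀ ⊆ T)) = ∅ := by
      rw [Finset.filter_eq_empty_iff]
      intro T hT hsub
      rw [Finset.mem_powersetCard_univ] at hT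
      have := Finset.card_le_card hsub
      omega
    rw [h1, Finset.card_empty, Nat.choose_eq_zero_of_lt (by omega : w < s)]
    ring

lemma prod_ind_pow {ι : Type*} [DecidableEq ι] (T : Finset ι) (m : ι →₀ ℕ) :
    (∏ i ∈ m.support, (if i ∈ T then (1:ℝ) else 0) ^ m i)
      = if m.support ⊆ T then 1 else 0 := by
  split_ifs with h
  · apply Finset.prod_eq_one
    intro i hi
    rw [if_pos (h hi), one_pow]
  · obtain ⟨i, hi, hiT⟩ := Finset.not_subset.mp h
    exact Finset.prod_eq_zero hi
      (by rw [if_neg hiT, zero_pow (Finsupp.mem_support_iff.mp hi)])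

/-- Cube lemma: a polynomial of total degree at most `d` on the Boolean cube that vanishes on
more than `d` full weight layers vanishes at the all-zero point. -/
lemma cube_lemma {ι : Type*} [Fintype ι] [DecidableEq ι] (d : ℕ) (q : MvPolynomial ι ℝ)
    (hq : q.totalDegree ≤ d) (S : Finset ℕ) (hSM : ∀ w ∈ S, w ≤ Fintype.card ι)
    (hcard : d < S.card)
    (hvanish : ∀ T : Finset ι, T.card ∈ S →
      MvPolynomial.eval (fun i => if i ∈ T then (1:ℝ) else 0) q = 0) :
    MvPolynomial.eval (fun _ => (0:ℝ)) q = 0 := by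
  classical
  set M := Fintype.card ι with hM
  set G : ℕ → ℝ := fun w => ∑ T ∈ Finset.univ.powersetCard w,
      MvPolynomial.eval (fun i => if i ∈ T then (1:ℝ) else 0) q with hG
  have hGform : ∀ w, G w = ∑ m ∈ q.support, q.coeff m *
      ((((Finset.univ.powersetCard w).filter (fun T => m.support ⊆ T)).card : ℕ) : ℝ) := by
    intro w
    rw [hG]
    simp only [MvPolynomial.eval_eq]
    rw [Finset.sum_comm]
    refine Finset.sum_congr rfl fun m _ => ?_
    rw [← Finset.mul_sum]
    congr 1
    calc (∑ T ∈ Finset.univ.powersetCard w, ∏ i ∈ m.support,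
            (if i ∈ T then (1:ℝ) else 0) ^ m i)
        = ∑ T ∈ Finset.univ.powersetCard w, (if m.support ⊆ T then (1:ℝ) else 0) :=
          Finset.sum_congr rfl fun T _ => prod_ind_pow T m
      _ = _ := by rw [Finset.sum_boole]
  set g : Polynomial ℝ := ∑ m ∈ q.support,
      Polynomial.C (q.coeff m / ((M.choose m.support.card) * (Nat.factorial m.support.card)))
        * descPochhammer ℝ m.support.card with hg
  have hsm : ∀ m ∈ q.support, m.support.card ≤ d := by
    intro m hm
    refine le_trans ?_ (le_trans (MvPolynomial.le_totalDegree hm) hq)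
    rw [Finsupp.sum]
    calc m.support.card = ∑ _i ∈ m.support, 1 := by simp
      _ ≤ ∑ i ∈ m.support, m i := Finset.sum_le_sum fun i hi =>
          Nat.one_le_iff_ne_zero.mpr (Finsupp.mem_support_iff.mp hi)
  have hgdeg : g.natDegree ≤ d := by
    rw [hg]
    apply Polynomial.natDegree_sum_le_of_forall_le
    intro m hm
    refine le_trans (Polynomial.natDegree_C_mul_le _ _) ?_
    rw [descPochhammer_natDegree]
    exact hsm m hm
  have hkey : ∀ w : ℕ, ((M.choose w : ℕ) : ℝ) * g.eval (w : ℝ) = G w := by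
    intro w
    rw [hGform w, hg, Polynomial.eval_finset_sum, Finset.mul_sum]
    refine Finset.sum_congr rfl fun m hm => ?_
    rw [Polynomial.eval_mul, Polynomial.eval_C, descPochhammer_eval_eq_descFactorial,
      Nat.descFactorial_eq_factorial_mul_choose]
    have hsM : m.support.card ≤ M := by
      rw [hM]
      exact Finset.card_le_univ _
    have hch : ((M.choose m.support.card : ℕ) : ℝ) ≠ 0 := by
      exact_mod_cast (Nat.choose_pos hsM).ne'
    have hfa : ((Nat.factorial m.support.card : ℕ) : ℝ) ≠ 0 := by
      exact_mod_cast (Nat.factorial_pos _).ne'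
    have hcnt : ((((Finset.univ.powersetCard w).filter
          (fun T => m.support ⊆ T)).card : ℕ) : ℝ) * ((M.choose m.support.card : ℕ) : ℝ)
        = ((M.choose w : ℕ) : ℝ) * ((w.choose m.support.card : ℕ) : ℝ) := by
      exact_mod_cast congrArg (Nat.cast : ℕ → ℝ) (count_supersets_mul m.support w)
    field_simp
    linear_combination (norm := (push_cast; ring)) MvPolynomial.coeff m q * (m.support.card.factorial : ℝ) * hcnt.symm
  have hGzero : ∀ w ∈ S, G w = 0 := by
    intro w hw
    refine Finset.sum_eq_zero fun T hT => hvanish T ?_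
    rwa [Finset.mem_powersetCard_univ.mp hT]
  have hgzero : g = 0 := by
    apply Polynomial.eq_zero_of_natDegree_lt_card_of_eval_eq_zero' g
      (S.image (Nat.cast : ℕ → ℝ))
    · intro r hr
      obtain ⟨w, hw, rfl⟩ := Finset.mem_image.mp hr
      have h1 := hkey w
      rw [hGzero w hw] at h1
      have h2 : ((M.choose w : ℕ) : ℝ) ≠ 0 := by
        exact_mod_cast (Nat.choose_pos (hSM w hw)).ne'
      exact (mul_eq_zero.mp h1).resolve_left h2
    · rw [Finset.card_image_of_injective _ Nat.cast_injective]
      exact lt_of_le_of_lt hgdeg hcard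
  have h0 := hkey 0
  rw [hgzero, Polynomial.eval_zero, mul_zero] at h0
  have hG0 : G 0 = MvPolynomial.eval (fun _ => (0:ℝ)) q := by
    rw [hG]
    simp only [Finset.powersetCard_zero, Finset.sum_singleton, Finset.notMem_empty,
      if_false]
  rw [hG0] at h0
  exact h0.symm

/-- Key lemma: if a polynomial of degree at most `d` vanishes at all shifted points
`x + ε·c` for lattice vectors `c ≤ m` whose weight lies in a set `S` of more than `d`
achievable weights, then it vanishes at `x`. -/
lemma key_vanish (n d : ℕ) (p : MvPolynomial (Fin n) ℝ) (hdeg : p.totalDegree ≤ d)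
    (m : Fin n → ℕ) (x : Fin n → ℝ) (ε : ℝ) (S : Finset ℕ) (hcard : d < S.card)
    (hSM : ∀ w ∈ S, w ≤ ∑ i, m i)
    (hvan : ∀ c : Fin n → ℕ, (∀ i, c i ≤ m i) → (∑ i, c i) ∈ S →
      MvPolynomial.eval (fun i => x i + ε * c i) p = 0) :
    MvPolynomial.eval x p = 0 := by
  classical
  set ι := (i : Fin n) × Fin (m i) with hι
  have hcardι : Fintype.card ι = ∑ i, m i := by
    simp [hι]
  set f : Fin n → MvPolynomial ι ℝ :=
    fun i => MvPolynomial.C (x i)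
      + MvPolynomial.C ε * ∑ t : Fin (m i), MvPolynomial.X (⟨i, t⟩ : ι) with hf
  set q : MvPolynomial ι ℝ := MvPolynomial.eval₂ MvPolynomial.C f p with hq
  have heval : ∀ y : ι → ℝ, MvPolynomial.eval y q
      = MvPolynomial.eval (fun i => MvPolynomial.eval y (f i)) p := by
    intro y
    rw [hq, MvPolynomial.eval_eval₂]
    have hcomp : ((MvPolynomial.eval y).comp (MvPolynomial.C : ℝ →+* MvPolynomial ι ℝ))
        = RingHom.id ℝ := RingHom.ext fun r => MvPolynomial.eval_C _
    rw [hcomp]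
    rfl
  have hfeval : ∀ (y : ι → ℝ) (i : Fin n),
      MvPolynomial.eval y (f i) = x i + ε * ∑ t : Fin (m i), y ⟨i, t⟩ := by
    intro y i
    simp [hf]
  have hqdeg : q.totalDegree ≤ d := by
    rw [hq, MvPolynomial.eval₂_eq]
    apply MvPolynomial.totalDegree_finsetSum_le
    intro md hmd
    refine le_trans (MvPolynomial.totalDegree_mul _ _) ?_
    have h1 : (MvPolynomial.C (p.coeff md) : MvPolynomial ι ℝ).totalDegree = 0 :=
      MvPolynomial.totalDegree_C _
    have hfi : ∀ i, (f i).totalDegree ≤ 1 := by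
      intro i
      rw [hf]
      refine le_trans (MvPolynomial.totalDegree_add _ _)
        (max_le (by simp [MvPolynomial.totalDegree_C]) ?_)
      refine le_trans (MvPolynomial.totalDegree_mul _ _) ?_
      simp only [MvPolynomial.totalDegree_C, Nat.zero_add]
      exact MvPolynomial.totalDegree_finsetSum_le fun t _ =>
        le_of_eq (MvPolynomial.totalDegree_X _)
    have h2 : (∏ i ∈ md.support, (f i) ^ md i).totalDegree ≤ ∑ i ∈ md.support, md i := by
      refine le_trans (MvPolynomial.totalDegree_finset_prod _ _)
        (Finset.sum_le_sum fun i _ => ?_)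
      refine le_trans (MvPolynomial.totalDegree_pow _ _) ?_
      calc md i * (f i).totalDegree ≤ md i * 1 := Nat.mul_le_mul_left _ (hfi i)
        _ = md i := Nat.mul_one _
    have h3 : ∑ i ∈ md.support, md i ≤ p.totalDegree := by
      have := MvPolynomial.le_totalDegree hmd
      rwa [Finsupp.sum] at this
    omega
  have h0 : MvPolynomial.eval (fun _ => (0:ℝ)) q = 0 := by
    apply cube_lemma d q hqdeg S (by rwa [hcardι]) hcard
    intro T hT
    set c : Fin n → ℕ :=
      fun i => (Finset.univ.filter (fun t : Fin (m i) => (⟨i, t⟩ : ι) ∈ T)).card with hc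
    have hcle : ∀ i, c i ≤ m i := by
      intro i
      rw [hc]
      calc _ ≤ (Finset.univ : Finset (Fin (m i))).card := Finset.card_filter_le _ _
        _ = m i := by simp
    have hsumc : ∑ i, c i = T.card := by
      rw [hc]
      have h4 : T.card = ∑ σ : ι, if σ ∈ T then 1 else 0 := by
        rw [← Finset.card_filter]
        congr 1
        simp [Finset.filter_mem_eq_inter]
      rw [h4, ← Finset.univ_sigma_univ, Finset.sum_sigma]
      exact Finset.sum_congr rfl fun i _ => Finset.card_filter _ _
    have heq : MvPolynomial.eval (fun σ : ι => if σ ∈ T then (1:ℝ) else 0) q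
        = MvPolynomial.eval (fun i => x i + ε * c i) p := by
      rw [heval]
      refine congrArg (fun y => MvPolynomial.eval y p) (funext fun i => ?_)
      rw [hfeval]
      simp only [hc]
      rw [Finset.sum_boole]
    rw [heq]
    exact hvan c hcle (by rw [hsumc]; exact hT)
  rw [heval] at h0
  have hx0 : (fun i => MvPolynomial.eval (fun _ => (0:ℝ)) (f i)) = x := by
    funext i
    rw [hfeval]
    simp
  rwa [hx0] at h0

/-- Closure Builder Lemma: for `E ⊆ [0,N]` with `|E| ≥ d+1`, every layer of weight in
`[0, min E] ∪ [max E, N]` is contained in the degree-`d` Z*-closure of `E̲`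
(i.e. the layer lies inside the degree-`d` Zariski closure of `E̲`). -/
theorem stmt_16 (n : ℕ) (k : Fin n → ℕ) (hk : ∀ i, 2 ≤ k i)
    (N : ℕ) (hN : N = ∑ i, (k i - 1)) (d : ℕ) (hd : d ≤ N)
    (E : Finset ℕ) (hEN : ∀ e ∈ E, e ≤ N) (hcard : d + 1 ≤ E.card) (hne : E.Nonempty) :
    ∀ j ≤ N, (j ≤ E.min' hne ∨ E.max' hne ≤ j) →
      underlineR n k {j} ⊆ ZclR n k d (underlineR n k ↑E) := by
  intro j hjN hj x hx
  obtain ⟨hgrid, j', hj', hsum⟩ := hx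
  rw [Set.mem_singleton_iff] at hj'
  rw [hj'] at hsum
  refine ⟨hgrid, fun p hdeg hvan => ?_⟩
  choose a ha hxa using hgrid
  have hsumj : ∑ i, a i = j := by
    have hc : ((∑ i, a i : ℕ) : ℝ) = (j : ℝ) := by
      push_cast
      rw [← hsum]
      exact Finset.sum_congr rfl fun i _ => (hxa i).symm
    exact_mod_cast hc
  have hxsum : ∑ i, x i = (j : ℝ) := hsum
  rcases hj with hj | hj
  · -- j ≤ min E : go upward, ε = 1
    set m : Fin n → ℕ := fun i => k i - 1 - a i with hm
    have hMsum : ∑ i, m i + j = N := by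
      rw [← hsumj, hN, ← Finset.sum_add_distrib]
      refine Finset.sum_congr rfl fun i _ => ?_
      have h1 := ha i
      have h2 := hk i
      simp only [hm]
      omega
    set S : Finset ℕ := E.image (fun e => e - j) with hS
    have hScard : d < S.card := by
      rw [hS, Finset.card_image_of_injOn]
      · omega
      · intro e₁ he₁ e₂ he₂ hee
        have hee' : e₁ - j = e₂ - j := hee
        have h1 := E.min'_le e₁ (Finset.mem_coe.mp he₁)
        have h2 := E.min'_le e₂ (Finset.mem_coe.mp he₂)
        omega
    apply key_vanish n d p hdeg m x 1 S hScard
    · intro w hw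
      rw [hS] at hw
      obtain ⟨e, he, rfl⟩ := Finset.mem_image.mp hw
      have := hEN e he
      omega
    · intro c hcle hcS
      rw [hS] at hcS
      obtain ⟨e, he, hce⟩ := Finset.mem_image.mp hcS
      have hje : j ≤ e := le_trans hj (E.min'_le e he)
      refine hvan _ ⟨fun i => ⟨a i + c i, ?_, ?_⟩, e, Finset.mem_coe.mpr he, ?_⟩
      · have h1 := ha i
        have h2 := hcle i
        simp only [hm] at h2
        omega
      · show x i + 1 * (c i : ℝ) = ((a i + c i : ℕ) : ℝ)
        rw [hxa i]
        push_cast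
        ring
      · show ∑ i, (x i + (1:ℝ) * (c i : ℝ)) = (e : ℝ)
        have h7 : ∑ i, (x i + (1:ℝ) * (c i : ℝ)) = (j : ℝ) + ((∑ i, c i : ℕ) : ℝ) := by
          rw [Finset.sum_add_distrib, hxsum, Nat.cast_sum]
          simp [one_mul]
        rw [h7]
        exact_mod_cast congrArg (Nat.cast : ℕ → ℝ) (show j + ∑ i, c i = e by omega)
  · -- max E ≤ j : go downward, ε = -1
    set m : Fin n → ℕ := fun i => a i with hm
    have hMsum : ∑ i, m i = j := hsumj
    set S : Finset ℕ := E.image (fun e => j - e) with hS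
    have hScard : d < S.card := by
      rw [hS, Finset.card_image_of_injOn]
      · omega
      · intro e₁ he₁ e₂ he₂ hee
        have hee' : j - e₁ = j - e₂ := hee
        have h1 := E.le_max' e₁ (Finset.mem_coe.mp he₁)
        have h2 := E.le_max' e₂ (Finset.mem_coe.mp he₂)
        omega
    apply key_vanish n d p hdeg m x (-1) S hScard
    · intro w hw
      rw [hS] at hw
      obtain ⟨e, he, rfl⟩ := Finset.mem_image.mp hw
      omega
    · intro c hcle hcS
      rw [hS] at hcS
      obtain ⟨e, he, hce⟩ := Finset.mem_image.mp hcS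
      have hej : e ≤ j := le_trans (E.le_max' e he) hj
      refine hvan _ ⟨fun i => ⟨a i - c i, ?_, ?_⟩, e, Finset.mem_coe.mpr he, ?_⟩
      · have h1 := ha i
        omega
      · show x i + (-1:ℝ) * (c i : ℝ) = ((a i - c i : ℕ) : ℝ)
        rw [hxa i]
        push_cast [Nat.cast_sub (show c i ≤ a i from hcle i)]
        ring
      · show ∑ i, (x i + (-1:ℝ) * (c i : ℝ)) = (e : ℝ)
        have h5 : ∑ i, (x i + (-1:ℝ) * (c i : ℝ)) = (j : ℝ) - ((∑ i, c i : ℕ) : ℝ) := by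
          rw [Finset.sum_add_distrib, hxsum, Nat.cast_sum]
          simp only [neg_one_mul]
          rw [Finset.sum_neg_distrib]
          ring
        rw [h5]
        have h8 : ((∑ i, c i : ℕ) : ℝ) = (j : ℝ) - (e : ℝ) := by
          have h6 : (∑ i, c i) + e = j := by omega
          have h9 := congrArg (Nat.cast : ℕ → ℝ) h6
          rw [Nat.cast_add] at h9
          linarith
        rw [h8]
        ring
end

section
/- Let G be a uniform grid and let ⪯ be the lexicographic monomial order induced by the coordinate order 1 > ⋯ > n. For i ≤ j in [0,⌊N/2⌋], the set of standard monomials of the vanishing ideal of the weight-i layer is contained in the set of standard monomials of the vanishing ideal of the weight-j layer: SM_⪯(i̲) ⊆ SM_⪯(j̲). -/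
/-- `p` vanishes on `A`, i.e. `p` belongs to the vanishing ideal `I(A)`. -/
def vanishesOn (n : ℕ) (A : Set (Fin n → ℝ)) (p : MvPolynomial (Fin n) ℝ) : Prop :=
  ∀ x ∈ A, MvPolynomial.eval x p = 0

/-- `s` is the leading monomial of `p` w.r.t. the lexicographic order induced by the
coordinate order `1 > ⋯ > n`. -/
def isLeadMon (n : ℕ) (p : MvPolynomial (Fin n) ℝ) (s : Fin n →₀ ℕ) : Prop :=
  s ∈ p.support ∧ ∀ t ∈ p.support, toLex t ≤ toLex s

/-- The standard monomials of the vanishing ideal of `A` w.r.t. the lexicographic order: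
monomials not divisible by the leading monomial of any polynomial vanishing on `A`. -/
def SM (n : ℕ) (A : Set (Fin n → ℝ)) : Set (Fin n →₀ ℕ) :=
  {m | ¬ ∃ p s, vanishesOn n A p ∧ p ≠ 0 ∧ isLeadMon n p s ∧ s ≤ m}

open MvPolynomial Finset

namespace SM18

variable {n : ℕ}


/-- pointwise ≤ implies lex ≤ -/
lemma lex_of_le {a b : Fin n →₀ ℕ} (h : a ≤ b) : toLex a ≤ toLex b :=
  Finsupp.toLex_monotone h

lemma eq_of_le_of_lex_le {a b : Fin n →₀ ℕ} (h : a ≤ b) (h2 : toLex b ≤ toLex a) : a = b :=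
  toLex_inj.mp (le_antisymm (Finsupp.toLex_monotone h) h2)

/-- the shifted monomial: `(X t + 1)^(a t) * ∏_{r≠t} X_r^(a r)` as an explicit sum -/
noncomputable def shMon (t : Fin n) (a : Fin n →₀ ℕ) : MvPolynomial (Fin n) ℝ :=
  ∑ c ∈ range (a t + 1), monomial (a.update t c) (((a t).choose c : ℝ))

noncomputable def rMon (t : Fin n) (a : Fin n →₀ ℕ) : MvPolynomial (Fin n) ℝ :=
  ∑ c ∈ range (a t), monomial (a.update t (c + 1)) (((a t).choose c : ℝ))

lemma prod_update_pow (x : Fin n → ℝ) (a : Fin n →₀ ℕ) (t : Fin n) (c : ℕ) :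
    ∏ r, x r ^ (a.update t c) r = x t ^ c * ∏ r ∈ univ.erase t, x r ^ a r := by
  classical
  rw [← Finset.mul_prod_erase univ _ (mem_univ t)]
  congr 1
  · rw [Finsupp.coe_update, Function.update_self]
  · apply Finset.prod_congr rfl
    intro r hr
    rw [Finsupp.coe_update, Function.update_of_ne (Finset.ne_of_mem_erase hr)]

lemma eval_monomial_univ (x : Fin n → ℝ) (a : Fin n →₀ ℕ) (r : ℝ) :
    eval x (monomial a r) = r * ∏ t, x t ^ a t := by
  rw [eval_monomial, Finsupp.prod_fintype]
  intro i; exact pow_zero _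

lemma eval_shMon (x : Fin n → ℝ) (t : Fin n) (a : Fin n →₀ ℕ) :
    eval x (shMon t a) = (x t + 1) ^ a t * ∏ r ∈ univ.erase t, x r ^ a r := by
  rw [shMon, map_sum]
  have : ∀ c ∈ range (a t + 1),
      eval x (monomial (a.update t c) (((a t).choose c : ℝ)))
        = (x t ^ c * 1 ^ (a t - c) * ((a t).choose c : ℝ)) * ∏ r ∈ univ.erase t, x r ^ a r := by
    intro c _
    rw [eval_monomial_univ, prod_update_pow]
    ring
  rw [Finset.sum_congr rfl this, ← Finset.sum_mul, ← add_pow]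

lemma eval_rMon (x : Fin n → ℝ) (t : Fin n) (a : Fin n →₀ ℕ) :
    eval x (rMon t a) = x t * ((x t + 1) ^ a t - x t ^ a t) * ∏ r ∈ univ.erase t, x r ^ a r := by
  rw [rMon, map_sum]
  have h1 : ∀ c ∈ range (a t),
      eval x (monomial (a.update t (c + 1)) (((a t).choose c : ℝ)))
        = x t * (x t ^ c * 1 ^ (a t - c) * ((a t).choose c : ℝ)) * ∏ r ∈ univ.erase t, x r ^ a r := by
    intro c _
    rw [eval_monomial_univ, prod_update_pow]
    ring
  rw [Finset.sum_congr rfl h1]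
  have h2 : (x t + 1) ^ a t - x t ^ a t
      = ∑ c ∈ range (a t), x t ^ c * 1 ^ (a t - c) * ((a t).choose c : ℝ) := by
    rw [add_pow, Finset.sum_range_succ, Nat.choose_self]
    simp
  rw [h2, ← Finset.sum_mul, Finset.mul_sum, Finset.sum_mul]

lemma update_le {a : Fin n →₀ ℕ} {t : Fin n} {c : ℕ} (h : c ≤ a t) : a.update t c ≤ a := by
  intro r
  rcases eq_or_ne r t with rfl | hr
  · simpa [Finsupp.coe_update] using h
  · simp [Finsupp.coe_update, Function.update_of_ne hr]

lemma support_shMon {t : Fin n} {a : Fin n →₀ ℕ} {b : Fin n →₀ ℕ}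
    (hb : b ∈ (shMon t a).support) : b ≤ a := by
  classical
  obtain ⟨c, hc, hb'⟩ := Finset.mem_biUnion.mp (MvPolynomial.support_sum hb)
  have := MvPolynomial.support_monomial_subset hb'
  rw [Finset.mem_singleton] at this
  subst this
  exact update_le (Nat.lt_succ_iff.mp (Finset.mem_range.mp hc))

lemma support_rMon {t : Fin n} {a : Fin n →₀ ℕ} {b : Fin n →₀ ℕ}
    (hb : b ∈ (rMon t a).support) : b ≤ a := by
  classical
  obtain ⟨c, hc, hb'⟩ := Finset.mem_biUnion.mp (MvPolynomial.support_sum hb)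
  have := MvPolynomial.support_monomial_subset hb'
  rw [Finset.mem_singleton] at this
  subst this
  exact update_le (Finset.mem_range.mp hc)

lemma update_eq_self_iff {a : Fin n →₀ ℕ} {t : Fin n} {c : ℕ} : a.update t c = a ↔ c = a t := by
  constructor
  · intro h
    have := congrArg (fun f => f t) h
    simpa [Finsupp.coe_update] using this
  · rintro rfl; exact Finsupp.update_self a t

lemma coeff_shMon_self (t : Fin n) (a : Fin n →₀ ℕ) : coeff a (shMon t a) = 1 := by
  classical
  rw [shMon, MvPolynomial.coeff_sum]
  rw [Finset.sum_eq_single (a t)]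
  · simp
  · intro c _ hc
    rw [coeff_monomial, if_neg]
    intro h
    exact hc (update_eq_self_iff.mp h)
  · intro h
    exact absurd (Finset.self_mem_range_succ (a t)) h

lemma coeff_rMon_self (t : Fin n) (a : Fin n →₀ ℕ) : coeff a (rMon t a) = (a t : ℝ) := by
  classical
  rcases Nat.eq_zero_or_pos (a t) with h0 | h0
  · rw [rMon, h0]; simp
  rw [rMon, MvPolynomial.coeff_sum]
  rw [Finset.sum_eq_single (a t - 1)]
  · rw [coeff_monomial, if_pos, Nat.choose_symm h0, Nat.choose_one_right]
    rw [update_eq_self_iff]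
    omega
  · intro c _ hc
    rw [coeff_monomial, if_neg]
    intro h
    rw [update_eq_self_iff] at h
    omega
  · intro h
    exact absurd (Finset.mem_range.mpr (by omega)) h


noncomputable def lMon (k : Fin n → ℕ) (i : ℕ) (a : Fin n →₀ ℕ) : MvPolynomial (Fin n) ℝ :=
  (∑ t, C ((k t : ℝ) - 1) * shMon t a) - (∑ t, rMon t a) - C (i : ℝ) * monomial a 1

lemma eval_lMon (k : Fin n → ℕ) (i : ℕ) (x : Fin n → ℝ) (a : Fin n →₀ ℕ) :
    eval x (lMon k i a)
      = (∑ t, ((k t : ℝ) - 1 - x t) * ((x t + 1) ^ a t * ∏ r ∈ univ.erase t, x r ^ a r))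
        + ((∑ r, x r) - (i : ℝ)) * ∏ r, x r ^ a r := by
  have hB : ∀ t : Fin n, x t ^ a t * ∏ r ∈ univ.erase t, x r ^ a r = ∏ r, x r ^ a r :=
    fun t => Finset.mul_prod_erase univ (fun r => x r ^ a r) (mem_univ t)
  simp only [lMon, map_sub, map_sum, map_mul, eval_C, eval_shMon, eval_rMon, eval_monomial_univ]
  rw [sub_mul, Finset.sum_mul, ← Finset.sum_sub_distrib]
  rw [one_mul, ← add_sub_assoc, sub_left_inj, ← Finset.sum_add_distrib]
  apply Finset.sum_congr rfl
  intro t _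
  rw [← hB t]
  ring

lemma support_lMon (k : Fin n → ℕ) (i : ℕ) {a b : Fin n →₀ ℕ}
    (hb : b ∈ (lMon k i a).support) : b ≤ a := by
  classical
  rcases Finset.mem_union.mp (MvPolynomial.support_sub _ _ _ hb) with h | h
  · rcases Finset.mem_union.mp (MvPolynomial.support_sub _ _ _ h) with h1 | h1
    · obtain ⟨t, _, hb'⟩ := Finset.mem_biUnion.mp (MvPolynomial.support_sum h1)
      have h2 := MvPolynomial.support_mul _ _ hb'
      rw [Finset.mem_add] at h2
      obtain ⟨u, hu, v, hv, rfl⟩ := h2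
      have hu0 : u = 0 := by
        rw [MvPolynomial.C_apply] at hu
        have := MvPolynomial.support_monomial_subset hu
        simpa using this
      rw [hu0, zero_add]
      exact support_shMon hv
    · obtain ⟨t, _, hb'⟩ := Finset.mem_biUnion.mp (MvPolynomial.support_sum h1)
      exact support_rMon hb'
  · have h2 := MvPolynomial.support_mul _ _ h
    rw [Finset.mem_add] at h2
    obtain ⟨u, hu, v, hv, rfl⟩ := h2
    have hu0 : u = 0 := by
      rw [MvPolynomial.C_apply] at hu
      have := MvPolynomial.support_monomial_subset hu
      simpa using this
    have hv' := MvPolynomial.support_monomial_subset hv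
    rw [Finset.mem_singleton] at hv'
    rw [hu0, zero_add, hv']

lemma coeff_lMon_self (k : Fin n → ℕ) (i : ℕ) (a : Fin n →₀ ℕ) :
    coeff a (lMon k i a)
      = (∑ t, ((k t : ℝ) - 1)) - (∑ t, (a t : ℝ)) - (i : ℝ) := by
  classical
  rw [lMon, coeff_sub, coeff_sub, MvPolynomial.coeff_sum, MvPolynomial.coeff_sum, coeff_C_mul,
    coeff_monomial, if_pos rfl, mul_one]
  congr 1
  congr 1
  · apply Finset.sum_congr rfl
    intro t _
    rw [coeff_C_mul, coeff_shMon_self, mul_one]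
  · apply Finset.sum_congr rfl
    intro t _
    exact coeff_rMon_self t a


noncomputable def stepPoly (k : Fin n → ℕ) (i : ℕ) (p : MvPolynomial (Fin n) ℝ) :
    MvPolynomial (Fin n) ℝ :=
  ∑ a ∈ p.support, C (coeff a p) * lMon k i a

lemma prod_update_point (x : Fin n → ℝ) (t : Fin n) (v : ℝ) (a : Fin n →₀ ℕ) :
    ∏ r, (Function.update x t v) r ^ a r = v ^ a t * ∏ r ∈ univ.erase t, x r ^ a r := by
  rw [← Finset.mul_prod_erase univ (fun r => Function.update x t v r ^ a r) (mem_univ t)]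
  congr 1
  · rw [Function.update_self]
  · apply Finset.prod_congr rfl
    intro r hr
    rw [Function.update_of_ne (Finset.ne_of_mem_erase hr)]

lemma eval_as_sum (p : MvPolynomial (Fin n) ℝ) (y : Fin n → ℝ) :
    eval y p = ∑ a ∈ p.support, coeff a p * ∏ r, y r ^ a r := by
  conv_lhs => rw [MvPolynomial.as_sum p]
  rw [map_sum]
  exact Finset.sum_congr rfl fun a _ => eval_monomial_univ y a _

lemma eval_stepPoly (k : Fin n → ℕ) (i : ℕ) (p : MvPolynomial (Fin n) ℝ) (x : Fin n → ℝ) :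
    eval x (stepPoly k i p)
      = (∑ t, ((k t : ℝ) - 1 - x t) * eval (Function.update x t (x t + 1)) p)
        + ((∑ r, x r) - (i : ℝ)) * eval x p := by
  rw [stepPoly, map_sum]
  have h1 : ∀ a ∈ p.support, eval x (C (coeff a p) * lMon k i a)
      = coeff a p * ((∑ t, ((k t : ℝ) - 1 - x t)
          * ((x t + 1) ^ a t * ∏ r ∈ univ.erase t, x r ^ a r))
        + ((∑ r, x r) - (i : ℝ)) * ∏ r, x r ^ a r) := by
    intro a _
    rw [map_mul, eval_C, eval_lMon]
  rw [Finset.sum_congr rfl h1]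
  simp only [eval_as_sum, prod_update_point]
  have h2 : ∀ t ∈ (univ : Finset (Fin n)), ((k t : ℝ) - 1 - x t)
      * (∑ a ∈ p.support, coeff a p * ((x t + 1) ^ a t * ∏ r ∈ univ.erase t, x r ^ a r))
      = ∑ a ∈ p.support, ((k t : ℝ) - 1 - x t)
          * (coeff a p * ((x t + 1) ^ a t * ∏ r ∈ univ.erase t, x r ^ a r)) :=
    fun t _ => Finset.mul_sum _ _ _
  rw [Finset.sum_congr rfl h2, Finset.sum_comm, Finset.mul_sum, ← Finset.sum_add_distrib]
  apply Finset.sum_congr rfl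
  intro a _
  rw [mul_add, Finset.mul_sum]
  congr 1
  · exact Finset.sum_congr rfl fun t _ => by ring
  · ring

lemma support_stepPoly (k : Fin n → ℕ) (i : ℕ) {p : MvPolynomial (Fin n) ℝ} {b : Fin n →₀ ℕ}
    (hb : b ∈ (stepPoly k i p).support) : ∃ a ∈ p.support, b ≤ a := by
  classical
  obtain ⟨a, ha, hb'⟩ := Finset.mem_biUnion.mp (MvPolynomial.support_sum hb)
  refine ⟨a, ha, ?_⟩
  have h2 := MvPolynomial.support_mul _ _ hb'
  rw [Finset.mem_add] at h2
  obtain ⟨u, hu, v, hv, rfl⟩ := h2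
  have hu0 : u = 0 := by
    rw [MvPolynomial.C_apply] at hu
    have := MvPolynomial.support_monomial_subset hu
    simpa using this
  rw [hu0, zero_add]
  exact support_lMon k i hv

lemma coeff_stepPoly_lead (k : Fin n → ℕ) (i : ℕ) {p : MvPolynomial (Fin n) ℝ}
    {s : Fin n →₀ ℕ} (hs : s ∈ p.support) (hmax : ∀ a ∈ p.support, toLex a ≤ toLex s) :
    coeff s (stepPoly k i p)
      = coeff s p * ((∑ t, ((k t : ℝ) - 1)) - (∑ t, (s t : ℝ)) - (i : ℝ)) := by
  classical
  rw [stepPoly, MvPolynomial.coeff_sum]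
  rw [Finset.sum_eq_single s]
  · rw [coeff_C_mul, coeff_lMon_self]
  · intro a ha hne
    rw [coeff_C_mul]
    have h0 : coeff s (lMon k i a) = 0 := by
      by_contra h
      have hsa : s ≤ a := support_lMon k i (MvPolynomial.mem_support_iff.mpr h)
      exact hne (eq_of_le_of_lex_le hsa (hmax a ha)).symm
    rw [h0, mul_zero]
  · intro h
    exact absurd hs h



/-- `p` has all monomials dividing `u` and leading coefficient 1 at `u`. -/
def LO (u : Fin n →₀ ℕ) (p : MvPolynomial (Fin n) ℝ) : Prop :=
  (∀ b ∈ p.support, b ≤ u) ∧ coeff u p = 1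

lemma LO_mul {u v : Fin n →₀ ℕ} {p q : MvPolynomial (Fin n) ℝ}
    (hp : LO u p) (hq : LO v q) : LO (u + v) (p * q) := by
  classical
  constructor
  · intro b hb
    have h2 := MvPolynomial.support_mul _ _ hb
    rw [Finset.mem_add] at h2
    obtain ⟨b1, hb1, b2, hb2, rfl⟩ := h2
    exact add_le_add (hp.1 b1 hb1) (hq.1 b2 hb2)
  · rw [MvPolynomial.coeff_mul]
    rw [Finset.sum_eq_single (u, v)]
    · rw [hp.2, hq.2, one_mul]
    · rintro ⟨b, c⟩ hbc hne
      have hsum : b + c = u + v := Finset.HasAntidiagonal.mem_antidiagonal.mp hbc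
      by_contra h
      have hb : coeff b p ≠ 0 := fun h0 => h (by rw [h0, zero_mul])
      have hc : coeff c q ≠ 0 := fun h0 => h (by rw [h0, mul_zero])
      have hbu : b ≤ u := hp.1 b (MvPolynomial.mem_support_iff.mpr hb)
      have hcv : c ≤ v := hq.1 c (MvPolynomial.mem_support_iff.mpr hc)
      apply hne
      have hb' : b = u := by
        ext r
        have h1 : b r ≤ u r := hbu r
        have h2 : c r ≤ v r := hcv r
        have h3 : b r + c r = u r + v r := by
          have := congrArg (fun f => f r) hsum
          simpa using this
        omega
      have hc' : c = v := by
        ext r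
        have h1 : b r ≤ u r := hbu r
        have h2 : c r ≤ v r := hcv r
        have h3 : b r + c r = u r + v r := by
          have := congrArg (fun f => f r) hsum
          simpa using this
        omega
      rw [hb', hc']
    · intro h
      exact absurd ((Finset.HasAntidiagonal.mem_antidiagonal (a := (u, v))).mpr rfl) h

lemma LO_one : LO (0 : Fin n →₀ ℕ) (1 : MvPolynomial (Fin n) ℝ) := by
  constructor
  · intro b hb
    rw [← MvPolynomial.C_1, MvPolynomial.C_apply] at hb
    have h := MvPolynomial.support_monomial_subset hb
    rw [Finset.mem_singleton] at h
    simp [h]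
  · simp

lemma LO_prod {ι : Type*} (F : Finset ι) (f : ι → MvPolynomial (Fin n) ℝ) (g : ι → (Fin n →₀ ℕ))
    (h : ∀ t ∈ F, LO (g t) (f t)) : LO (∑ t ∈ F, g t) (∏ t ∈ F, f t) := by
  classical
  induction F using Finset.induction_on with
  | empty => simpa using LO_one
  | insert a s hx ih =>
    rw [Finset.sum_insert hx, Finset.prod_insert hx]
    exact LO_mul (h a (Finset.mem_insert_self a s))
      (ih fun t ht => h t (Finset.mem_insert_of_mem ht))

lemma LO_linfactor (t : Fin n) (c : ℝ) : LO (Finsupp.single t 1) (X t - C c) := by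
  constructor
  · intro b hb
    rcases Finset.mem_union.mp (MvPolynomial.support_sub _ _ _ hb) with h | h
    · rw [MvPolynomial.support_X] at h
      rw [Finset.mem_singleton] at h
      exact le_of_eq h
    · rw [MvPolynomial.C_apply] at h
      have := MvPolynomial.support_monomial_subset h
      rw [Finset.mem_singleton] at this
      rw [this]
      exact _root_.zero_le
  · have hne : (0 : Fin n →₀ ℕ) ≠ Finsupp.single t 1 := by
      intro h
      have h2 := congrArg (fun f : Fin n →₀ ℕ => f t) h
      simp only [Finsupp.coe_zero, Pi.zero_apply, Finsupp.single_eq_same] at h2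
      exact zero_ne_one h2
    rw [coeff_sub, coeff_X, coeff_C, if_neg hne, sub_zero, if_pos rfl]

noncomputable def phiPoly (s : Fin n →₀ ℕ) : MvPolynomial (Fin n) ℝ :=
  ∏ t, ∏ c ∈ range (s t), (X t - C (c : ℝ))

lemma sum_single_eq (s : Fin n →₀ ℕ) : (∑ t, Finsupp.single t (s t)) = s := by
  ext r
  rw [Finsupp.finset_sum_apply]
  rw [Finset.sum_eq_single r]
  · simp
  · intro t _ hne
    exact Finsupp.single_eq_of_ne' hne
  · intro h
    exact absurd (mem_univ r) h

lemma LO_phiPoly (s : Fin n →₀ ℕ) : LO s (phiPoly s) := by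
  have h := LO_prod univ (fun t => ∏ c ∈ range (s t), (X t - C (c : ℝ)))
    (fun t => Finsupp.single t (s t)) ?_
  · rwa [sum_single_eq] at h
  · intro t _
    have h2 := LO_prod (range (s t)) (fun c => X t - C (c : ℝ))
      (fun _ => Finsupp.single t 1) (fun c _ => LO_linfactor t c)
    simpa [Finset.sum_const, Finsupp.smul_single] using h2

lemma eval_phiPoly_zero (s : Fin n →₀ ℕ) (x : Fin n → ℝ) (a : Fin n → ℕ)
    (hx : ∀ t, x t = a t) (t : Fin n) (ht : a t < s t) : eval x (phiPoly s) = 0 := by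
  rw [phiPoly, map_prod]
  apply Finset.prod_eq_zero (mem_univ t)
  rw [map_prod]
  apply Finset.prod_eq_zero (Finset.mem_range.mpr ht)
  rw [map_sub, eval_X, eval_C, hx t, sub_eq_zero]


lemma grid_coords {k : Fin n → ℕ} {x : Fin n → ℝ} (hx : x ∈ gridSetR n k) :
    ∃ a : Fin n → ℕ, (∀ t, x t = a t) ∧ (∀ t, a t < k t) := by
  choose a ha hxa using hx
  exact ⟨a, hxa, ha⟩

lemma step (k : Fin n → ℕ) (N : ℕ) (hN : N = ∑ t, (k t - 1)) (hk : ∀ t, 2 ≤ k t) (i : ℕ)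
    (hi : 2 * i + 2 ≤ N) (s : Fin n →₀ ℕ)
    (h : ∃ p, vanishesOn n {x | x ∈ gridSetR n k ∧ ∑ t, x t = ((i + 1 : ℕ) : ℝ)} p
          ∧ p ≠ 0 ∧ isLeadMon n p s) :
    ∃ q, vanishesOn n {x | x ∈ gridSetR n k ∧ ∑ t, x t = (i : ℝ)} q
          ∧ q ≠ 0 ∧ isLeadMon n q s := by
  obtain ⟨p, hvan, hp0, hs, hmax⟩ := h
  have hNcast : (N : ℝ) = ∑ t, ((k t : ℝ) - 1) := by
    rw [hN, Nat.cast_sum]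
    apply Finset.sum_congr rfl
    intro t _
    rw [Nat.cast_sub (le_trans one_le_two (hk t)), Nat.cast_one]
  by_cases hdeg : (∑ t, s t) ≤ i
  · -- use the step operator
    refine ⟨stepPoly k i p, ?_, ?_, ?_, ?_⟩
    · -- vanishing
      rintro x ⟨hxg, hxs⟩
      obtain ⟨a, hxa, hak⟩ := grid_coords hxg
      have hsum_nat : (∑ t, a t) = i := by
        have h1 : ((∑ t, a t : ℕ) : ℝ) = (i : ℝ) := by
          rw [Nat.cast_sum, ← hxs]
          exact Finset.sum_congr rfl fun t _ => (hxa t).symm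
        exact_mod_cast h1
      rw [eval_stepPoly]
      have hzero1 : (∑ r, x r) - (i : ℝ) = 0 := by rw [hxs]; ring
      rw [hzero1, zero_mul, add_zero]
      apply Finset.sum_eq_zero
      intro t _
      by_cases hca : a t = k t - 1
      · have hz : (k t : ℝ) - 1 - x t = 0 := by
          rw [hxa t, hca, Nat.cast_sub (le_trans one_le_two (hk t)), Nat.cast_one]
          ring
        rw [hz, zero_mul]
      · have hlt : a t + 1 < k t := by have := hak t; omega
        have hmem : (Function.update x t (x t + 1))
            ∈ {x | x ∈ gridSetR n k ∧ ∑ r, x r = ((i + 1 : ℕ) : ℝ)} := by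
          constructor
          · intro r
            by_cases hr : r = t
            · subst hr
              exact ⟨a r + 1, hlt, by rw [Function.update_self, hxa r]; push_cast; ring⟩
            · exact ⟨a r, hak r, by rw [Function.update_of_ne hr]; exact hxa r⟩
          · rw [Finset.sum_update_of_mem (mem_univ t)]
            have h3 : x t + ∑ r ∈ univ.erase t, x r = (i : ℝ) := by
              rw [Finset.add_sum_erase univ x (mem_univ t)]
              exact hxs
            rw [Finset.sdiff_singleton_eq_erase]
            push_cast
            linarith
        rw [hvan _ hmem, mul_zero]
    all_goals {
      have hcoef : coeff s (stepPoly k i p)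
          = coeff s p * ((N : ℝ) - ((∑ t, s t : ℕ) : ℝ) - (i : ℝ)) := by
        rw [coeff_stepPoly_lead k i hs hmax, ← hNcast, Nat.cast_sum]
      have hcs : coeff s p ≠ 0 := MvPolynomial.mem_support_iff.mp hs
      have hf : ((N : ℝ) - ((∑ t, s t : ℕ) : ℝ) - (i : ℝ)) ≠ 0 := by
        have hlt : (∑ t, s t) + i < N := by omega
        have hlt' : ((∑ t, s t : ℕ) : ℝ) + (i : ℝ) < (N : ℝ) := by exact_mod_cast hlt
        intro hc
        linarith
      have hq0 : coeff s (stepPoly k i p) ≠ 0 := by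
        rw [hcoef]
        exact mul_ne_zero hcs hf
      first
        | exact fun hz => hq0 (by rw [hz]; simp)
        | exact MvPolynomial.mem_support_iff.mpr hq0
        | exact fun b hb => by
            obtain ⟨a, ha, hba⟩ := support_stepPoly k i hb
            exact le_trans (lex_of_le hba) (hmax a ha)
    }
  · -- use the falling-factorial polynomial
    obtain ⟨hsupp, hcoef⟩ := LO_phiPoly (n := n) s
    have hq0 : phiPoly s ≠ 0 := fun hz => by
      rw [hz] at hcoef
      simp at hcoef
    refine ⟨phiPoly s, ?_, hq0, ?_, ?_⟩
    · rintro x ⟨hxg, hxs⟩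
      obtain ⟨a, hxa, _⟩ := grid_coords hxg
      have hsum_nat : (∑ t, a t) = i := by
        have h1 : ((∑ t, a t : ℕ) : ℝ) = (i : ℝ) := by
          rw [Nat.cast_sum, ← hxs]
          exact Finset.sum_congr rfl fun t _ => (hxa t).symm
        exact_mod_cast h1
      have hex : ∃ t, a t < s t := by
        by_contra hc
        push_neg at hc
        have : (∑ t, s t) ≤ (∑ t, a t) := Finset.sum_le_sum fun t _ => hc t
        omega
      obtain ⟨t, ht⟩ := hex
      exact eval_phiPoly_zero s x a hxa t ht
    · exact MvPolynomial.mem_support_iff.mpr (by rw [hcoef]; exact one_ne_zero)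
    · intro b hb
      exact lex_of_le (hsupp b hb)

lemma descend (k : Fin n → ℕ) (N : ℕ) (hN : N = ∑ t, (k t - 1)) (hk : ∀ t, 2 ≤ k t) :
    ∀ (d i : ℕ), 2 * (i + d) ≤ N → ∀ s : Fin n →₀ ℕ,
      (∃ p, vanishesOn n {x | x ∈ gridSetR n k ∧ ∑ t, x t = ((i + d : ℕ) : ℝ)} p
          ∧ p ≠ 0 ∧ isLeadMon n p s) →
      (∃ q, vanishesOn n {x | x ∈ gridSetR n k ∧ ∑ t, x t = (i : ℝ)} q
          ∧ q ≠ 0 ∧ isLeadMon n q s) := by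
  intro d
  induction d with
  | zero =>
    intro i _ s hp
    simpa using hp
  | succ d ih =>
    intro i hbound s hp
    apply ih i (by omega) s
    have hp' : ∃ p, vanishesOn n
        {x | x ∈ gridSetR n k ∧ ∑ t, x t = (((i + d) + 1 : ℕ) : ℝ)} p
          ∧ p ≠ 0 ∧ isLeadMon n p s := by
      have : (i + (d + 1)) = ((i + d) + 1) := by omega
      rwa [this] at hp
    exact step k N hN hk (i + d) (by omega) s hp'

end SM18

/-- For layers of weights `i ≤ j ≤ ⌊N/2⌋` in a uniform grid, the standard monomials of the
vanishing ideal of the weight-`i` layer are contained in those of the weight-`j` layer. -/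
theorem stmt_18 (n : ℕ) (k : Fin n → ℕ) (hk : ∀ i, 2 ≤ k i)
    (N : ℕ) (hN : N = ∑ i, (k i - 1)) (i j : ℕ) (hij : i ≤ j) (hj : j ≤ N / 2) :
    SM n {x | x ∈ gridSetR n k ∧ ∑ t, x t = (i : ℝ)} ⊆
      SM n {x | x ∈ gridSetR n k ∧ ∑ t, x t = (j : ℝ)} := by
  intro m hm
  rintro ⟨p, s, hvan, hp0, hlead, hsm⟩
  apply hm
  have hj2 : 2 * j ≤ N := by omega
  have hij' : j = i + (j - i) := by omega
  obtain ⟨q, hqvan, hq0, hqlead⟩ := SM18.descend k N hN hk (j - i) i (by omega) s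
    ⟨p, by rwa [← hij'], hp0, hlead⟩
  exact ⟨q, s, hqvan, hq0, hqlead, hsm⟩
end
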